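/- arXiv:0802.3874 — 12 statements merged into one kernel-verified Lean document; each statement's English description precedes it below -/
import Mathlib

section
/- The arithmetic distance d(A,B) = rank(A − B) restricted to the set of self-adjoint (Hermitian) complex n×n matrices is geodesic: if A, B are Hermitian with rank(A − B) = k ≥ 2, there exists a Hermitian matrix C with rank(A − C) = 1 and rank(C − B) = k − 1. -/
/-!
Diagonalize the Hermitian matrix `A - B = U diag(μ) U*`; its rank `k` is the number of nonzero
eigenvalues `μ i`. Splitting off one nonzero eigenvalue, `R = U diag(μ i • eᵢ) U*` is Hermitian of
rank one and `A - B - R = U diag(μ with μ i replaced by 0) U*` has rank `k - 1`, so `C = A - R`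
works.
-/

open Function

namespace Matrix

variable {ι : Type*} [DecidableEq ι] {𝕜 : Type*} [RCLike 𝕜]

theorem isHermitian_diagonal_ofReal (d : ι → ℝ) :
    (diagonal (RCLike.ofReal ∘ d : ι → 𝕜)).IsHermitian :=
  isHermitian_diagonal_of_self_adjoint _ <| funext fun i => RCLike.conj_ofReal (d i)

theorem diagonal_ofReal_sub (d e : ι → ℝ) :
    diagonal (RCLike.ofReal ∘ (d - e) : ι → 𝕜) =
      diagonal (RCLike.ofReal ∘ d) - diagonal (RCLike.ofReal ∘ e) := by
  rw [diagonal_sub]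
  congr 1
  ext i
  simp

variable [Fintype ι]

theorem rank_conjStarAlgAut {R : Type*} [CommRing R] [StarRing R]
    (u : unitary (Matrix ι ι R)) (X : Matrix ι ι R) :
    (Unitary.conjStarAlgAut R _ u X).rank = X.rank := by
  have hdet (v : unitary (Matrix ι ι R)) : IsUnit (v : Matrix ι ι R).det :=
    (isUnit_iff_isUnit_det _).mp Unitary.isUnit_coe
  rw [Unitary.conjStarAlgAut_apply, ← Unitary.coe_star,
    rank_mul_eq_left_of_isUnit_det _ _ (hdet _), rank_mul_eq_right_of_isUnit_det _ _ (hdet u)]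

theorem rank_diagonal_ofReal (d : ι → ℝ) :
    (diagonal (RCLike.ofReal ∘ d : ι → 𝕜)).rank = (support d).ncard := by
  rw [rank_diagonal, ← Nat.card_coe_set_eq, Fintype.card_eq_nat_card]
  exact Nat.card_congr (Equiv.subtypeEquivRight fun i => RCLike.ofReal_ne_zero)

theorem IsHermitian.exists_isHermitian_rank_eq_one_rank_sub {M : Matrix ι ι 𝕜}
    (hM : M.IsHermitian) (h : M.rank ≠ 0) :
    ∃ R : Matrix ι ι 𝕜, R.IsHermitian ∧ R.rank = 1 ∧ (M - R).rank = M.rank - 1 := by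
  set Φ := Unitary.conjStarAlgAut 𝕜 _ hM.eigenvectorUnitary
  set μ := hM.eigenvalues
  have hrank : M.rank = (support μ).ncard := by
    rw [hM.rank_eq_card_non_zero_eigs, ← Nat.card_coe_set_eq, Fintype.card_eq_nat_card]
    rfl
  obtain ⟨i, hi⟩ : (support μ).Nonempty := Set.nonempty_of_ncard_ne_zero (hrank ▸ h)
  refine ⟨Φ (diagonal (RCLike.ofReal ∘ Pi.single i (μ i))), ?_, ?_, ?_⟩
  · exact ((isHermitian_diagonal_ofReal _).isSelfAdjoint.map Φ).isHermitian
  · rw [rank_conjStarAlgAut, rank_diagonal_ofReal, Pi.support_single_of_ne hi, Set.ncard_singleton]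
  · have hrest : μ - Pi.single i (μ i) = update μ i 0 := by
      rw [Pi.update_eq_sub_add_single, Pi.single_zero, add_zero]
    conv_lhs => rw [hM.spectral_theorem]
    rw [← map_sub, ← diagonal_ofReal_sub, hrest, rank_conjStarAlgAut, rank_diagonal_ofReal,
      support_update_zero, Set.ncard_sdiff_singleton_of_mem hi, hrank]

end Matrix

/-- Arithmetic distance is geodesic on Hermitian complex matrices. -/
theorem stmt_2 {n : ℕ} (A B : Matrix (Fin n) (Fin n) ℂ)
    (hA : A.IsHermitian) (hB : B.IsHermitian) (k : ℕ)
    (hk : (A - B).rank = k) (h2 : 2 ≤ k) :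
    ∃ C : Matrix (Fin n) (Fin n) ℂ, C.IsHermitian ∧
      (A - C).rank = 1 ∧ (C - B).rank = k - 1 := by
  obtain ⟨R, hR, hR_rank, hAB_sub_R⟩ :=
    (hA.sub hB).exists_isHermitian_rank_eq_one_rank_sub (by omega)
  refine ⟨A - R, hA.sub hR, by rwa [sub_sub_cancel], ?_⟩
  rw [sub_right_comm, hAB_sub_R, hk]
end

section
/- The arithmetic distance d(A,B) = rank(A − B) restricted to the set of unitary complex n×n matrices is geodesic: if U₁, U₂ are unitary with rank(U₁ − U₂) = k ≥ 2, there exists a unitary matrix V with rank(U₁ − V) = 1 and rank(V − U₂) = k − 1. -/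
/-!
Multiplying on the left by `U₁⁻¹` reduces to `U₁ = 1`, `U₂ = W` with `rank (1 - W) = k`.
The range of `1 - W` is `W`-invariant, so it contains an eigenvector `v` of `W`; its eigenvalue
`μ` is not `1`, because fixed vectors of a unitary are orthogonal to the range of `1 - W`.
With `P` the orthogonal projection onto `ℂ v`, the matrix `X = (1 - P) + μ P` is unitary and
`1 - X = (1 - μ) P` has rank at most one. Fixed vectors of `W` are orthogonal to `v`, so
`ker (X - W)` contains `ker (1 - W)` and also `v`, whence `rank (X - W) < k`. Subadditivity of
rank, `k ≤ rank (1 - X) + rank (X - W)`, then forces `rank (1 - X) = 1` and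
`rank (X - W) = k - 1`.
-/

open Matrix
open scoped ComplexOrder

theorem IsStarProjection.one_sub_add_smul_mem_unitary {R A : Type*} [CommRing R] [StarRing R]
    [Ring A] [StarRing A] [Algebra R A] [StarModule R A] {p : A} (hp : IsStarProjection p)
    {μ : R} (hμ : μ ∈ unitary R) : 1 - p + μ • p ∈ unitary A := by
  have hmul : ∀ a b : R, (1 - p + a • p) * (1 - p + b • p) = 1 - p + (a * b) • p := by
    have hpp : p * p = p := hp.isIdempotentElem.eq
    intro a b
    simp only [mul_add, add_mul, mul_sub, sub_mul, mul_one, one_mul, smul_mul_assoc,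
      mul_smul_comm, hpp]
    module
  have hstar : star (1 - p + μ • p) = 1 - p + star μ • p := by
    rw [star_add, star_sub, star_one, star_smul, hp.isSelfAdjoint.star_eq]
  rw [Unitary.mem_iff, hstar, hmul, hmul, Unitary.star_mul_self_of_mem hμ,
    Unitary.mul_star_self_of_mem hμ, one_smul, sub_add_cancel]
  exact ⟨rfl, rfl⟩

namespace Matrix

section Rank

variable {m n K : Type*} [Fintype n] [Field K]

theorem rank_add_le (A B : Matrix m n K) : (A + B).rank ≤ A.rank + B.rank := by
  unfold rank
  rw [mulVecLin_add]
  exact (Submodule.finrank_mono (LinearMap.range_add_le _ _)).trans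
    (Submodule.finrank_add_le_finrank_add_finrank _ _)

theorem rank_lt_rank_of_ker_lt_ker {A B : Matrix m n K}
    (h : LinearMap.ker A.mulVecLin < LinearMap.ker B.mulVecLin) : B.rank < A.rank := by
  have hA := LinearMap.finrank_range_add_finrank_ker A.mulVecLin
  have hB := LinearMap.finrank_range_add_finrank_ker B.mulVecLin
  have := Submodule.finrank_lt_finrank_of_lt h
  unfold rank
  omega

end Rank

theorem rank_mul_of_mem_unitaryGroup {m n R : Type*} [Fintype m] [Fintype n] [DecidableEq n]
    [CommRing R] [StarRing R] {U : Matrix n n R} (hU : U ∈ unitaryGroup n R) (A : Matrix n m R) :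
    (U * A).rank = A.rank :=
  rank_mul_eq_right_of_isUnit_det U A (UnitaryGroup.det_isUnit ⟨U, hU⟩)

section StarRing

variable {n R : Type*} [Fintype n] [DecidableEq n] [CommRing R] [StarRing R] {W : Matrix n n R}

theorem star_mulVec_dotProduct_mulVec (hW : W ∈ unitaryGroup n R) (x y : n → R) :
    star (W *ᵥ x) ⬝ᵥ (W *ᵥ y) = star x ⬝ᵥ y := by
  rw [star_mulVec, dotProduct_mulVec, vecMul_vecMul, ← star_eq_conjTranspose,
    mem_unitaryGroup_iff'.mp hW, vecMul_one]

theorem star_dotProduct_one_sub_mulVec_eq_zero (hW : W ∈ unitaryGroup n R) {u : n → R}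
    (hWu : W *ᵥ u = u) (y : n → R) : star u ⬝ᵥ ((1 - W) *ᵥ y) = 0 := by
  have h := star_mulVec_dotProduct_mulVec hW u y
  rw [hWu] at h
  rw [sub_mulVec, one_mulVec, dotProduct_sub, h, sub_self]

end StarRing

variable {n 𝕜 : Type*} [Fintype n] [RCLike 𝕜]

theorem isStarProjection_vecMulVec {v : n → 𝕜} (hv : v ≠ 0) :
    IsStarProjection (vecMulVec ((star v ⬝ᵥ v)⁻¹ • v) (star v)) := by
  have hc : star v ⬝ᵥ v ≠ 0 := dotProduct_star_self_eq_zero.not.mpr hv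
  have hc' : star (star v ⬝ᵥ v) = star v ⬝ᵥ v :=
    (IsSelfAdjoint.of_nonneg (dotProduct_star_self_nonneg v)).star_eq
  constructor
  · rw [IsIdempotentElem, vecMulVec_mul_vecMulVec, dotProduct_smul, smul_eq_mul,
      inv_mul_cancel₀ hc, one_smul]
  · rw [IsSelfAdjoint, star_eq_conjTranspose, conjTranspose_vecMulVec, star_smul, star_inv₀, hc',
      star_star, vecMulVec_smul, smul_vecMulVec]

section Unitary

variable [DecidableEq n] {W : Matrix n n 𝕜} {v : n → 𝕜} {μ : 𝕜}

theorem mem_unitary_of_mulVec_eq_smul (hW : W ∈ unitaryGroup n 𝕜) (hv : v ≠ 0)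
    (hWv : W *ᵥ v = μ • v) : μ ∈ unitary 𝕜 := by
  have h := star_mulVec_dotProduct_mulVec hW v v
  rw [hWv, star_smul, smul_dotProduct, dotProduct_smul, smul_smul, smul_eq_mul] at h
  rw [Unitary.mem_iff_star_mul_self]
  exact (mul_left_eq_self₀.mp h).resolve_right (dotProduct_star_self_eq_zero.not.mpr hv)

theorem conjTranspose_mulVec_eq_star_smul (hW : W ∈ unitaryGroup n 𝕜) (hv : v ≠ 0)
    (hWv : W *ᵥ v = μ • v) : Wᴴ *ᵥ v = star μ • v := by
  have hμ := Unitary.star_mul_self_of_mem (mem_unitary_of_mulVec_eq_smul hW hv hWv)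
  calc Wᴴ *ᵥ v = Wᴴ *ᵥ ((star μ * μ) • v) := by rw [hμ, one_smul]
    _ = star μ • ((Wᴴ * W) *ᵥ v) := by rw [← mulVec_mulVec, hWv, mul_smul, mulVec_smul]
    _ = star μ • v := by rw [← star_eq_conjTranspose, mem_unitaryGroup_iff'.mp hW, one_mulVec]

theorem star_dotProduct_eq_zero_of_mulVec_eq_smul (hW : W ∈ unitaryGroup n 𝕜) (hv : v ≠ 0)
    (hWv : W *ᵥ v = μ • v) {u : n → 𝕜} {ν : 𝕜} (hWu : W *ᵥ u = ν • u)
    (hμν : μ ≠ ν) : star v ⬝ᵥ u = 0 := by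
  have h : μ * (star v ⬝ᵥ u) = ν * (star v ⬝ᵥ u) :=
    calc μ * (star v ⬝ᵥ u) = star (Wᴴ *ᵥ v) ⬝ᵥ u := by
          rw [conjTranspose_mulVec_eq_star_smul hW hv hWv, star_smul, star_star, smul_dotProduct,
            smul_eq_mul]
      _ = star v ⬝ᵥ (W *ᵥ u) := by
          rw [star_mulVec, conjTranspose_conjTranspose, dotProduct_mulVec]
      _ = ν * (star v ⬝ᵥ u) := by rw [hWu, dotProduct_smul, smul_eq_mul]
  by_contra hu
  exact hμν (mul_right_cancel₀ hu h)

end Unitary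

variable [DecidableEq n] {W : Matrix n n ℂ}

theorem exists_mulVec_eq_smul_ne_one (hW : W ∈ unitaryGroup n ℂ) (hW1 : W ≠ 1) :
    ∃ μ : ℂ, μ ≠ 1 ∧ ∃ v ≠ 0, W *ᵥ v = μ • v := by
  set R := LinearMap.range (1 - W).mulVecLin
  have hR : ∀ x ∈ R, W.mulVecLin x ∈ R := by
    rintro _ ⟨y, rfl⟩
    refine ⟨W *ᵥ y, ?_⟩
    simp only [mulVecLin_apply, mulVec_mulVec, mul_sub, sub_mul, mul_one, one_mul]
  have : Nontrivial R := by
    rw [Submodule.nontrivial_iff_ne_bot, Ne, LinearMap.range_eq_bot]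
    intro h
    exact hW1 (sub_eq_zero.mp (toLin'.injective (h.trans (map_zero _).symm))).symm
  obtain ⟨μ, hμ⟩ := Module.End.exists_eigenvalue (W.mulVecLin.restrict hR)
  obtain ⟨⟨v, y, rfl⟩, hv⟩ := hμ.exists_hasEigenvector
  have hv0 : (1 - W) *ᵥ y ≠ 0 := fun h => hv.2 (Subtype.ext h)
  have hWv : W *ᵥ ((1 - W) *ᵥ y) = μ • ((1 - W) *ᵥ y) :=
    congrArg Subtype.val hv.apply_eq_smul
  refine ⟨μ, ?_, _, hv0, hWv⟩
  rintro rfl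
  rw [one_smul] at hWv
  exact hv0 (dotProduct_star_self_eq_zero.mp (star_dotProduct_one_sub_mulVec_eq_zero hW hWv y))

theorem exists_mem_unitaryGroup_rank_one_sub_eq_one (hW : W ∈ unitaryGroup n ℂ)
    (hW1 : W ≠ 1) :
    ∃ X ∈ unitaryGroup n ℂ, (1 - X).rank = 1 ∧ (X - W).rank = (1 - W).rank - 1 := by
  obtain ⟨μ, hμ1, v, hv, hWv⟩ := exists_mulVec_eq_smul_ne_one hW hW1
  set P := vecMulVec ((star v ⬝ᵥ v)⁻¹ • v) (star v)
  have hPv : P *ᵥ v = v := by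
    rw [vecMulVec_mulVec, op_smul_eq_smul, smul_smul,
      mul_inv_cancel₀ (dotProduct_star_self_eq_zero.not.mpr hv), one_smul]
  have hPu : ∀ u, star v ⬝ᵥ u = 0 → P *ᵥ u = 0 := fun u hu => by
    rw [vecMulVec_mulVec, hu, MulOpposite.op_zero, zero_smul]
  set X := 1 - P + μ • P
  have hXW : ∀ u, (X - W) *ᵥ u = u - W *ᵥ u - (1 - μ) • P *ᵥ u := fun u => by
    simp only [X, sub_mulVec, add_mulVec, one_mulVec, smul_mulVec]
    module
  refine ⟨X, (isStarProjection_vecMulVec hv).one_sub_add_smul_mem_unitary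
    (mem_unitary_of_mulVec_eq_smul hW hv hWv), ?_⟩
  have hX1 : (1 - X).rank ≤ 1 := by
    have : 1 - X = vecMulVec ((1 - μ) • (star v ⬝ᵥ v)⁻¹ • v) (star v) := by
      rw [smul_vecMulVec]
      module
    exact this ▸ rank_vecMulVec_le _ _
  have hker : LinearMap.ker (1 - W).mulVecLin < LinearMap.ker (X - W).mulVecLin := by
    simp only [SetLike.lt_iff_le_and_exists, SetLike.le_def, LinearMap.mem_ker, mulVecLin_apply]
    refine ⟨fun u hu => ?_, v, ?_, ?_⟩
    · have hWu : W *ᵥ u = u := by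
        rw [sub_mulVec, one_mulVec, sub_eq_zero] at hu
        exact hu.symm
      have hvu : star v ⬝ᵥ u = 0 :=
        star_dotProduct_eq_zero_of_mulVec_eq_smul hW hv hWv (ν := 1) (by rwa [one_smul]) hμ1
      rw [hXW, hWu, hPu u hvu, sub_self, smul_zero, sub_zero]
    · rw [hXW, hWv, hPv]
      module
    · have h : (1 - W) *ᵥ v = (1 - μ) • v := by
        rw [sub_mulVec, one_mulVec, hWv]
        module
      rw [h]
      exact smul_ne_zero (sub_ne_zero.mpr hμ1.symm) hv
  have hsum : (1 - W).rank ≤ (1 - X).rank + (X - W).rank :=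
    sub_add_sub_cancel (1 : Matrix n n ℂ) X W ▸ rank_add_le (1 - X) (X - W)
  have := rank_lt_rank_of_ker_lt_ker hker
  omega

end Matrix

/-- Arithmetic distance is geodesic on unitary complex matrices. -/
theorem stmt_3 {n : ℕ} (U₁ U₂ : Matrix (Fin n) (Fin n) ℂ)
    (hU₁ : U₁ ∈ Matrix.unitaryGroup (Fin n) ℂ)
    (hU₂ : U₂ ∈ Matrix.unitaryGroup (Fin n) ℂ) (k : ℕ)
    (hk : (U₁ - U₂).rank = k) (h2 : 2 ≤ k) :
    ∃ V : Matrix (Fin n) (Fin n) ℂ, V ∈ Matrix.unitaryGroup (Fin n) ℂ ∧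
      (U₁ - V).rank = 1 ∧ (V - U₂).rank = k - 1 := by
  set W := star U₁ * U₂
  have hW : W ∈ unitaryGroup (Fin n) ℂ := mul_mem (Unitary.star_mem hU₁) hU₂
  have hU₁W : U₁ * W = U₂ := by
    rw [← mul_assoc, mem_unitaryGroup_iff.mp hU₁, one_mul]
  have hWk : (1 - W).rank = k := by
    rw [← rank_mul_of_mem_unitaryGroup hU₁, mul_sub, mul_one, hU₁W, hk]
  have hW1 : W ≠ 1 := by
    intro h
    rw [h, sub_self, rank_zero] at hWk
    omega
  obtain ⟨X, hX, hX1, hXW⟩ := exists_mem_unitaryGroup_rank_one_sub_eq_one hW hW1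
  refine ⟨U₁ * X, mul_mem hU₁ hX, ?_, ?_⟩
  · rw [← rank_mul_of_mem_unitaryGroup hU₁ (1 - X), mul_sub, mul_one] at hX1
    exact hX1
  · rw [← rank_mul_of_mem_unitaryGroup hU₁, mul_sub, hU₁W, hWk] at hXW
    exact hXW
end

section
/- Let A and B be normal complex n×n matrices, λ ∈ ℂ and ε ≥ 0. Let R(M, λ, ε) denote the subspace of ℂⁿ spanned by all eigenvectors of M whose eigenvalue α satisfies |λ − α| ≤ ε. Then |dim R(A, λ, ε) − dim R(B, λ, ε)| ≤ rank(A − B). -/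
/-- The span of eigenvectors of `M` with eigenvalue within `ε` of `λ`. -/
noncomputable def eigSpan {n : ℕ} (M : Matrix (Fin n) (Fin n) ℂ) (lam : ℂ) (ε : ℝ) :
    Submodule ℂ (Fin n → ℂ) :=
  Submodule.span ℂ {v | v ≠ 0 ∧ ∃ α : ℂ, ‖lam - α‖ ≤ ε ∧ M.mulVec v = α • v}

/-! A normal operator `T` is diagonalizable and its eigenspaces are mutually orthogonal, so for
`v = ∑ v_α` in the span of eigenvectors with eigenvalues in `s`,
`‖(T - λ) v‖² = ∑ |α - λ|² ‖v_α‖²`. Hence `‖(A - λ) v‖ ≤ ε ‖v‖` on `R(A, λ, ε)`, while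
`‖(B - λ) v‖ > ε ‖v‖` for every nonzero `v` in the span `C` of the eigenvectors of `B` with
eigenvalue farther than `ε` from `λ`. As `A = B` on `R(A, λ, ε) ∩ ker (A - B)`, this subspace,
of codimension at most `rank (A - B)` in `R(A, λ, ε)`, meets `C` trivially; since
`R(B, λ, ε) + C` is the whole space, its dimension is at most `dim R(B, λ, ε)`. -/

open Module Module.End Metric ComplexStarModule

section Finrank

variable {K V W : Type*} [DivisionRing K] [AddCommGroup V] [Module K V] [FiniteDimensional K V]
  [AddCommGroup W] [Module K W]

theorem Submodule.finrank_le_finrank_inf_ker_add_finrank_range (p : Submodule K V)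
    (f : V →ₗ[K] W) :
    finrank K p ≤ finrank K ↥(p ⊓ LinearMap.ker f) + finrank K (LinearMap.range f) := by
  have := Submodule.finrank_sup_add_finrank_inf_eq p (LinearMap.ker f)
  have := Submodule.finrank_le (p ⊔ LinearMap.ker f)
  have := f.finrank_range_add_finrank_ker
  omega

theorem Submodule.finrank_le_of_disjoint_of_codisjoint {p q r : Submodule K V}
    (hpr : Disjoint p r) (hqr : Codisjoint q r) : finrank K p ≤ finrank K q := by
  have := Submodule.finrank_add_finrank_le_of_disjoint hpr
  have := Submodule.finrank_add_le_finrank_add_finrank q r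
  rw [hqr.eq_top, finrank_top] at this
  omega

end Finrank

section Normal

variable {E : Type*} [NormedAddCommGroup E] [InnerProductSpace ℂ E] [FiniteDimensional ℂ E]
  {T : Module.End ℂ E} [IsStarNormal T]

namespace Module.End

theorem isSemisimple_of_isStarNormal : T.IsSemisimple := by
  have hself {S : Module.End ℂ E} (hS : IsSelfAdjoint S) : S.IsSemisimple :=
    isFinitelySemisimple_iff_isSemisimple.mp
      (LinearMap.isSymmetric_iff_isSelfAdjoint S |>.mpr hS).isFinitelySemisimple
  rw [← realPart_add_I_smul_imaginaryPart T]
  exact IsSemisimple.add_of_commute ((Commute.realPart_imaginaryPart T).smul_right Complex.I)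
    (hself (ℜ T).2) (IsSemisimple_smul _ (hself (ℑ T).2))

theorem norm_adjoint_apply_of_isStarNormal (v : E) : ‖T.adjoint v‖ = ‖T v‖ := by
  have h : T (T.adjoint v) = T.adjoint (T v) := by
    simpa [LinearMap.star_eq_adjoint] using congr($(star_comm_self' T) v).symm
  refine (sq_eq_sq₀ (norm_nonneg _) (norm_nonneg _)).mp ?_
  rw [@norm_sq_eq_re_inner ℂ, @norm_sq_eq_re_inner ℂ, LinearMap.adjoint_inner_right, h,
    LinearMap.adjoint_inner_left]

theorem adjoint_apply_of_mem_eigenspace {α : ℂ} {v : E} (hv : v ∈ eigenspace T α) :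
    T.adjoint v = star α • v := by
  have : IsStarNormal (T - α • 1) := Commute.isStarNormal_sub <| by
    rw [star_smul, star_one]; exact (Commute.one_right T).smul_right _
  have h := norm_adjoint_apply_of_isStarNormal (T := T - α • 1) v
  rw [mem_eigenspace_iff] at hv
  simpa [hv, ← LinearMap.star_eq_adjoint, sub_eq_zero] using h

variable (T) in
theorem orthogonalFamily_eigenspaces_of_isStarNormal :
    OrthogonalFamily ℂ (fun α => eigenspace T α) fun α => (eigenspace T α).subtypeₗᵢ := by
  rintro α β hαβ ⟨v, hv⟩ ⟨w, hw⟩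
  have h := LinearMap.adjoint_inner_left T w v
  rw [adjoint_apply_of_mem_eigenspace hv, mem_eigenspace_iff.mp hw, inner_smul_left,
    inner_smul_right, Complex.star_def, Complex.conj_conj] at h
  exact (mul_eq_mul_right_iff.mp h).resolve_left hαβ

theorem exists_norm_sq_eq_sum_of_mem_iSup_eigenspace {s : Set ℂ} {v : E}
    (hv : v ∈ ⨆ α ∈ s, eigenspace T α) (c : ℂ) :
    ∃ (t : Finset s) (w : s → E), ‖v‖ ^ 2 = ∑ α ∈ t, ‖w α‖ ^ 2 ∧
      ‖T v - c • v‖ ^ 2 = ∑ α ∈ t, ‖(α : ℂ) - c‖ ^ 2 * ‖w α‖ ^ 2 := by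
  rw [iSup_subtype'] at hv
  obtain ⟨f, hf, rfl⟩ := (Submodule.mem_iSup_iff_exists_finsupp _ v).mp hv
  have hO := (orthogonalFamily_eigenspaces_of_isStarNormal T).comp
    (Subtype.val_injective (p := (· ∈ s)))
  refine ⟨f.support, f, hO.norm_sum (fun α => ⟨f α, hf α⟩) f.support, ?_⟩
  have hsum : T (f.sum fun _ x => x) - c • (f.sum fun _ x => x) =
      ∑ α ∈ f.support, ((α : ℂ) - c) • f α := by
    simp only [Finsupp.sum, map_sum, Finset.smul_sum, ← Finset.sum_sub_distrib, sub_smul,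
      (mem_eigenspace_iff.mp (hf _))]
  rw [hsum]
  simpa only [Submodule.coe_subtypeₗᵢ, Submodule.subtype_apply, Submodule.coe_norm,
    Submodule.coe_smul, norm_smul, mul_pow] using
    hO.norm_sum (fun α => ⟨((α : ℂ) - c) • f α, Submodule.smul_mem _ _ (hf α)⟩) f.support

theorem norm_sq_apply_sub_smul_le_of_mem_iSup_closedBall {c : ℂ} {r : ℝ} {v : E}
    (hv : v ∈ ⨆ α ∈ closedBall c r, eigenspace T α) :
    ‖T v - c • v‖ ^ 2 ≤ r ^ 2 * ‖v‖ ^ 2 := by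
  obtain ⟨t, w, hv, hTv⟩ := exists_norm_sq_eq_sum_of_mem_iSup_eigenspace hv c
  rw [hv, hTv, Finset.mul_sum]
  gcongr with α
  exact mem_closedBall_iff_norm.mp α.2

theorem lt_norm_sq_apply_sub_smul_of_mem_iSup_compl_closedBall {c : ℂ} {r : ℝ} (hr : 0 ≤ r)
    {v : E} (hv : v ∈ ⨆ α ∈ (closedBall c r)ᶜ, eigenspace T α) (hv0 : v ≠ 0) :
    r ^ 2 * ‖v‖ ^ 2 < ‖T v - c • v‖ ^ 2 := by
  obtain ⟨t, w, hv', hTv⟩ := exists_norm_sq_eq_sum_of_mem_iSup_eigenspace hv c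
  have hfar (α : ↥(closedBall c r)ᶜ) : r ^ 2 < ‖(α : ℂ) - c‖ ^ 2 :=
    pow_lt_pow_left₀ (not_le.mp (mt mem_closedBall_iff_norm.mpr α.2)) hr two_ne_zero
  have hpos : ∑ α ∈ t, ‖w α‖ ^ 2 ≠ 0 := hv' ▸ by positivity
  obtain ⟨α₀, hα₀, hwα₀⟩ := Finset.exists_ne_zero_of_sum_ne_zero hpos
  rw [hv', hTv, Finset.mul_sum]
  refine Finset.sum_lt_sum (fun α _ => mul_le_mul_of_nonneg_right (hfar α).le (by positivity))
    ⟨α₀, hα₀, ?_⟩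
  exact mul_lt_mul_of_pos_right (hfar α₀) (lt_of_le_of_ne (by positivity) hwα₀.symm)

end Module.End

theorem finrank_iSup_eigenspace_closedBall_le (S T : Module.End ℂ E) [IsStarNormal S]
    [IsStarNormal T] (c : ℂ) {r : ℝ} (hr : 0 ≤ r) :
    finrank ℂ ↥(⨆ α ∈ closedBall c r, eigenspace S α) ≤
      finrank ℂ ↥(⨆ α ∈ closedBall c r, eigenspace T α) +
        finrank ℂ (LinearMap.range (S - T)) := by
  refine (Submodule.finrank_le_finrank_inf_ker_add_finrank_range _ (S - T)).trans
    (Nat.add_le_add_right ?_ _)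
  refine Submodule.finrank_le_of_disjoint_of_codisjoint
    (r := ⨆ α ∈ (closedBall c r)ᶜ, eigenspace T α) ?_ ?_
  · rw [Submodule.disjoint_def]
    intro v hv hvT
    obtain ⟨hvS, hvK⟩ := Submodule.mem_inf.mp hv
    by_contra hv0
    have hST : S v = T v := sub_eq_zero.mp hvK
    have := norm_sq_apply_sub_smul_le_of_mem_iSup_closedBall hvS
    have := lt_norm_sq_apply_sub_smul_of_mem_iSup_compl_closedBall hr hvT hv0
    rw [hST] at *
    linarith
  · exact codisjoint_iff.mpr <| (iSup_split (eigenspace T) (· ∈ closedBall c r)).symm.trans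
      isSemisimple_of_isStarNormal.iSup_eigenspace_eq_top

end Normal

section Matrix

variable {n : ℕ}

open Matrix

theorem eigSpan_eq_map (M : Matrix (Fin n) (Fin n) ℂ) (lam : ℂ) (ε : ℝ) :
    eigSpan M lam ε = (⨆ α ∈ closedBall lam ε, eigenspace (toEuclideanLin M) α).map
      (WithLp.linearEquiv 2 ℂ (Fin n → ℂ) : EuclideanSpace ℂ (Fin n) →ₗ[ℂ] _) := by
  apply le_antisymm
  · refine Submodule.span_le.mpr ?_
    rintro v ⟨-, α, hα, hv⟩
    refine ⟨WithLp.toLp 2 v, Submodule.mem_iSup_of_mem α <| Submodule.mem_iSup_of_mem ?_ ?_,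
      rfl⟩
    · rwa [mem_closedBall_iff_norm, norm_sub_rev]
    · rw [mem_eigenspace_iff, toLpLin_toLp, toLin'_apply, hv, WithLp.toLp_smul]
  · rw [Submodule.map_le_iff_le_comap]
    refine iSup₂_le fun α hα w hw => ?_
    rcases eq_or_ne w 0 with rfl | hw0
    · exact Submodule.zero_mem _
    refine Submodule.subset_span ⟨?_, α, ?_, ?_⟩
    · exact (WithLp.linearEquiv 2 ℂ (Fin n → ℂ)).map_ne_zero_iff.mpr hw0
    · rwa [norm_sub_rev, ← mem_closedBall_iff_norm]
    · exact congrArg WithLp.ofLp (mem_eigenspace_iff.mp hw)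

theorem finrank_eigSpan (M : Matrix (Fin n) (Fin n) ℂ) (lam : ℂ) (ε : ℝ) :
    finrank ℂ (eigSpan M lam ε) =
      finrank ℂ ↥(⨆ α ∈ closedBall lam ε, eigenspace (toEuclideanLin M) α) := by
  rw [eigSpan_eq_map]
  exact LinearEquiv.finrank_map_eq _ _

theorem isStarNormal_toEuclideanLin {A : Matrix (Fin n) (Fin n) ℂ} (hA : A * Aᴴ = Aᴴ * A) :
    IsStarNormal (toEuclideanLin A) :=
  have : IsStarNormal A := ⟨hA.symm⟩
  IsStarNormal.map (LinearMap.toMatrixOrthonormal (EuclideanSpace.basisFun (Fin n) ℂ)).symm A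

theorem rank_eq_finrank_range_toEuclideanLin (A : Matrix (Fin n) (Fin n) ℂ) :
    A.rank = finrank ℂ (LinearMap.range (toEuclideanLin A)) := by
  rw [toEuclideanLin_eq_toLin_orthonormal]
  exact rank_eq_finrank_range_toLin _ _ _

end Matrix

/-- Theorem 4: for normal matrices the dimensions of `eigSpan` differ by at
most the rank of the difference. -/
theorem stmt_6 {n : ℕ} (A B : Matrix (Fin n) (Fin n) ℂ)
    (hA : A * A.conjTranspose = A.conjTranspose * A)
    (hB : B * B.conjTranspose = B.conjTranspose * B)
    (lam : ℂ) (ε : ℝ) (hε : 0 ≤ ε) :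
    |(Module.finrank ℂ (eigSpan A lam ε) : ℤ) -
      (Module.finrank ℂ (eigSpan B lam ε) : ℤ)| ≤ (A - B).rank := by
  have := isStarNormal_toEuclideanLin hA
  have := isStarNormal_toEuclideanLin hB
  have hAB := finrank_iSup_eigenspace_closedBall_le (Matrix.toEuclideanLin A)
    (Matrix.toEuclideanLin B) lam hε
  have hBA := finrank_iSup_eigenspace_closedBall_le (Matrix.toEuclideanLin B)
    (Matrix.toEuclideanLin A) lam hε
  rw [← neg_sub, LinearMap.range_neg] at hBA
  rw [finrank_eigSpan, finrank_eigSpan, rank_eq_finrank_range_toEuclideanLin, map_sub,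
    abs_sub_le_iff]
  omega
end

section
/- Let N be a normal operator on a finite-dimensional complex inner product space, λ ∈ ℂ, ε ≥ 0, a > 1, and X a subspace with ‖(N − λ)x‖ ≤ ε‖x‖ for all x ∈ X. Let P be the orthogonal projection onto the span R(λ, aε) of eigenvectors of N with eigenvalues within distance aε of λ. Then ‖Px‖ ≥ √(1 − 1/a²)·‖x‖ for all x ∈ X. -/
/-!
Since `N` is normal, its real and imaginary parts are commuting self-adjoint operators, so `N` has
an orthonormal eigenbasis `(bᵢ, μᵢ)`. In the coordinates `cᵢ = ⟪bᵢ, x⟫` the hypothesis on `x ∈ X`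
reads `∑ |μᵢ - λ|² |cᵢ|² ≤ ε² ∑ |cᵢ|²`, so the coefficients on eigenvalues farther than `aε` from
`λ` carry at most `‖x‖² / a²`. The component `y` of `x` along the remaining eigenvectors lies in
`R(λ, aε)`, and `Px` is the best approximation of `x` in that subspace, whence
`‖Px‖² = ‖x‖² - ‖x - Px‖² ≥ ‖x‖² - ‖x - y‖² ≥ (1 - 1/a²) ‖x‖²`.
-/

open Module.End Submodule ComplexStarModule
open scoped InnerProductSpace

theorem DirectSum.IsInternal.exists_orthonormalBasis_subordinate {ι 𝕜 E : Type*} [DecidableEq ι]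
    [RCLike 𝕜] [NormedAddCommGroup E] [InnerProductSpace 𝕜 E] [FiniteDimensional 𝕜 E]
    {V : ι → Submodule 𝕜 E} (hV : DirectSum.IsInternal V)
    (hV' : OrthogonalFamily 𝕜 (fun i => V i) fun i => (V i).subtypeₗᵢ) :
    ∃ (b : OrthonormalBasis (Fin (Module.finrank 𝕜 E)) 𝕜 E) (f : Fin (Module.finrank 𝕜 E) → ι),
      ∀ k, b k ∈ V (f k) := by
  -- `subordinateOrthonormalBasis` needs a finite index type, so drop the zero summands.
  have : Fintype {i // V i ≠ ⊥} := (finite_ne_bot_of_iSupIndep hV.submodule_iSupIndep).fintype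
  have hW := DirectSum.isInternal_ne_bot_iff.mpr hV
  have hW' := hV'.comp (Subtype.val_injective (p := fun i => V i ≠ ⊥))
  exact ⟨hW.subordinateOrthonormalBasis rfl hW',
    fun k => (hW.subordinateOrthonormalBasisIndex rfl k hW').1,
    fun k => hW.subordinateOrthonormalBasis_subordinate rfl k hW'⟩

section NormalOperator

variable {E : Type*} [NormedAddCommGroup E] [InnerProductSpace ℂ E] [FiniteDimensional ℂ E]

theorem LinearMap.apply_eq_smul_of_mem_eigenspace_realPart_inf_imaginaryPart
    {T : E →ₗ[ℂ] E} {α β : ℂ} {v : E}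
    (hv : v ∈ eigenspace (ℜ T : E →ₗ[ℂ] E) α ⊓ eigenspace (ℑ T : E →ₗ[ℂ] E) β) :
    T v = (α + Complex.I * β) • v := by
  obtain ⟨hα, hβ⟩ := mem_inf.mp hv
  rw [mem_eigenspace_iff] at hα hβ
  conv_lhs => rw [← realPart_add_I_smul_imaginaryPart T]
  simp only [LinearMap.add_apply, LinearMap.smul_apply, hα, hβ, add_smul, smul_smul]

theorem LinearMap.exists_orthonormalBasis_apply_eq_smul_of_isStarNormal
    (T : E →ₗ[ℂ] E) [IsStarNormal T] :
    ∃ (b : OrthonormalBasis (Fin (Module.finrank ℂ E)) ℂ E) (μ : Fin (Module.finrank ℂ E) → ℂ),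
      ∀ k, T (b k) = μ k • b k := by
  have hA : (ℜ T : E →ₗ[ℂ] E).IsSymmetric := (isSymmetric_iff_isSelfAdjoint _).mpr (ℜ T).2
  have hB : (ℑ T : E →ₗ[ℂ] E).IsSymmetric := (isSymmetric_iff_isSelfAdjoint _).mpr (ℑ T).2
  obtain ⟨b, p, hb⟩ := (hA.directSum_isInternal_of_commute hB
    (Commute.realPart_imaginaryPart T)).exists_orthonormalBasis_subordinate
    (hA.orthogonalFamily_eigenspace_inf_eigenspace hB)
  exact ⟨b, fun k => (p k).2 + Complex.I * (p k).1,
    fun k => apply_eq_smul_of_mem_eigenspace_realPart_inf_imaginaryPart (hb k)⟩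

end NormalOperator

theorem Finset.sq_mul_sum_filter_lt_le_of_sum_sq_mul_le {ι : Type*} {s : Finset ι} {d w : ι → ℝ}
    (hw : ∀ i, 0 ≤ w i) {ε a : ℝ} (hε : 0 ≤ ε) (ha : 0 ≤ a)
    (h : ∑ i ∈ s, d i ^ 2 * w i ≤ ε ^ 2 * ∑ i ∈ s, w i) :
    a ^ 2 * ∑ i ∈ s with a * ε < d i, w i ≤ ∑ i ∈ s, w i := by
  have hterm_nonneg : ∀ i ∈ s, 0 ≤ d i ^ 2 * w i := fun i _ => mul_nonneg (sq_nonneg _) (hw i)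
  rcases hε.eq_or_lt with rfl | hε
  · have hterm : ∀ i ∈ s, d i ^ 2 * w i = 0 :=
      (Finset.sum_eq_zero_iff_of_nonneg hterm_nonneg).mp
        (le_antisymm (by simpa using h) (Finset.sum_nonneg hterm_nonneg))
    have hfar : ∑ i ∈ s with a * 0 < d i, w i = 0 := by
      refine Finset.sum_eq_zero fun i hi => ?_
      obtain ⟨hi, hdi⟩ := Finset.mem_filter.mp hi
      rw [mul_zero] at hdi
      simpa [hdi.ne'] using hterm i hi
    rw [hfar, mul_zero]
    exact Finset.sum_nonneg fun i _ => hw i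
  · have hfar : (a * ε) ^ 2 * ∑ i ∈ s with a * ε < d i, w i ≤ ∑ i ∈ s, d i ^ 2 * w i :=
      calc (a * ε) ^ 2 * ∑ i ∈ s with a * ε < d i, w i
          = ∑ i ∈ s with a * ε < d i, (a * ε) ^ 2 * w i := Finset.mul_sum _ _ _
        _ ≤ ∑ i ∈ s with a * ε < d i, d i ^ 2 * w i := by
            refine Finset.sum_le_sum fun i hi => ?_
            have := (Finset.mem_filter.mp hi).2
            gcongr
            exact hw i
        _ ≤ ∑ i ∈ s, d i ^ 2 * w i :=
            Finset.sum_le_sum_of_subset_of_nonneg (Finset.filter_subset _ _)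
              fun i hi _ => hterm_nonneg i hi
    refine le_of_mul_le_mul_left ?_ (pow_pos hε 2)
    nlinarith

namespace OrthonormalBasis

variable {ι 𝕜 E : Type*} [Fintype ι] [RCLike 𝕜] [NormedAddCommGroup E] [InnerProductSpace 𝕜 E]

theorem inner_apply_of_apply_eq_smul (b : OrthonormalBasis ι 𝕜 E) {T : E →ₗ[𝕜] E} {μ : ι → 𝕜}
    (hT : ∀ i, T (b i) = μ i • b i) (x : E) (i : ι) :
    ⟪b i, T x⟫_𝕜 = μ i * ⟪b i, x⟫_𝕜 := by
  classical
  conv_lhs => rw [← b.sum_repr' x]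
  simp [hT, inner_sum, inner_smul_right, b.inner_eq_ite, mul_comm]

theorem exists_mem_span_near_sq_mul_norm_sub_sq_le (b : OrthonormalBasis ι 𝕜 E) {T : E →ₗ[𝕜] E}
    {μ : ι → 𝕜} (hT : ∀ i, T (b i) = μ i • b i) (lam : 𝕜) {ε a : ℝ} (hε : 0 ≤ ε) (ha : 0 ≤ a)
    {x : E} (hx : ‖T x - lam • x‖ ≤ ε * ‖x‖) :
    ∃ y ∈ span 𝕜 (b '' {i | ‖lam - μ i‖ ≤ a * ε}), a ^ 2 * ‖x - y‖ ^ 2 ≤ ‖x‖ ^ 2 := by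
  classical
  set c := fun i => ⟪b i, x⟫_𝕜
  refine ⟨∑ i with ‖lam - μ i‖ ≤ a * ε, c i • b i,
    sum_mem fun i hi => smul_mem _ _ (subset_span ⟨i, (Finset.mem_filter.mp hi).2, rfl⟩), ?_⟩
  have hdist : ‖x - ∑ i with ‖lam - μ i‖ ≤ a * ε, c i • b i‖ ^ 2 =
      ∑ i with a * ε < ‖lam - μ i‖, ‖c i‖ ^ 2 := by
    rw [← b.sum_sq_norm_inner_right]
    conv_rhs => rw [Finset.sum_filter]
    refine Finset.sum_congr rfl fun i _ => ?_
    by_cases hi : ‖lam - μ i‖ ≤ a * ε <;>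
      simp [hi, c, inner_sub_right, inner_sum, inner_smul_right, b.inner_eq_ite]
  have hnear : ∑ i, ‖lam - μ i‖ ^ 2 * ‖c i‖ ^ 2 ≤ ε ^ 2 * ∑ i, ‖c i‖ ^ 2 := by
    rw [b.sum_sq_norm_inner_right]
    calc ∑ i, ‖lam - μ i‖ ^ 2 * ‖c i‖ ^ 2 = ‖T x - lam • x‖ ^ 2 := by
          rw [← b.sum_sq_norm_inner_right]
          refine Finset.sum_congr rfl fun i _ => ?_
          rw [inner_sub_right, inner_smul_right, b.inner_apply_of_apply_eq_smul hT, ← sub_mul,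
            norm_mul, mul_pow, norm_sub_rev]
      _ ≤ (ε * ‖x‖) ^ 2 := by gcongr
      _ = ε ^ 2 * ‖x‖ ^ 2 := mul_pow _ _ _
  rw [hdist, ← b.sum_sq_norm_inner_right]
  exact Finset.sq_mul_sum_filter_lt_le_of_sum_sq_mul_le (fun i => sq_nonneg _) hε ha hnear

end OrthonormalBasis

theorem Submodule.norm_sub_starProjection_le {𝕜 E : Type*} [RCLike 𝕜] [NormedAddCommGroup E]
    [InnerProductSpace 𝕜 E] (U : Submodule 𝕜 E) [U.HasOrthogonalProjection] (x : E) {y : E}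
    (hy : y ∈ U) : ‖x - U.starProjection x‖ ≤ ‖x - y‖ := by
  rw [starProjection_minimal]
  exact ciInf_le (f := fun z : U => ‖x - z‖)
    ⟨0, Set.forall_mem_range.mpr fun _ => norm_nonneg _⟩ ⟨y, hy⟩

theorem Submodule.norm_sq_eq_norm_starProjection_sq_add {𝕜 E : Type*} [RCLike 𝕜]
    [NormedAddCommGroup E] [InnerProductSpace 𝕜 E] (U : Submodule 𝕜 E) [U.HasOrthogonalProjection]
    (x : E) : ‖x‖ ^ 2 = ‖U.starProjection x‖ ^ 2 + ‖x - U.starProjection x‖ ^ 2 := by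
  have := norm_add_sq_eq_norm_sq_add_norm_sq_of_inner_eq_zero _ _
    (inner_eq_zero_symm.mp (U.starProjection_inner_eq_zero x _ (U.starProjection_apply_mem x)))
  rwa [add_sub_cancel, ← sq, ← sq, ← sq] at this

/-- Lemma (part 2): with `N`, `λ`, `ε`, `X` as before and `a > 1`, the
orthogonal projection `P` onto the span of eigenvectors with eigenvalue
within `a·ε` of `λ` satisfies `‖P x‖ ≥ √(1 - 1/a²)·‖x‖` on `X`. -/
theorem stmt_8 {L : Type*} [NormedAddCommGroup L] [InnerProductSpace ℂ L]
    [FiniteDimensional ℂ L] (N : L →ₗ[ℂ] L)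
    (hN : LinearMap.adjoint N * N = N * LinearMap.adjoint N)
    (lam : ℂ) (ε : ℝ) (hε : 0 ≤ ε) (a : ℝ) (ha : 1 < a)
    (X : Submodule ℂ L)
    (hX : ∀ x ∈ X, ‖N x - lam • x‖ ≤ ε * ‖x‖)
    (R : Submodule ℂ L)
    (hR : R = Submodule.span ℂ
      {x : L | x ≠ 0 ∧ ∃ α : ℂ, ‖lam - α‖ ≤ a * ε ∧ N x = α • x}) :
    ∀ x ∈ X, Real.sqrt (1 - 1 / a ^ 2) * ‖x‖ ≤ ‖(R.orthogonalProjection x : L)‖ := by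
  intro x hx
  have : IsStarNormal N := ⟨by rwa [commute_iff_eq, LinearMap.star_eq_adjoint]⟩
  obtain ⟨b, μ, hμ⟩ := N.exists_orthonormalBasis_apply_eq_smul_of_isStarNormal
  obtain ⟨y, hy, hxy⟩ :=
    b.exists_mem_span_near_sq_mul_norm_sub_sq_le hμ lam hε (by linarith) (hX x hx)
  have hyR : y ∈ R := by
    refine hR ▸ span_mono ?_ hy
    rintro _ ⟨i, hi, rfl⟩
    exact ⟨b.orthonormal.ne_zero i, μ i, hi, hμ i⟩
  rw [← starProjection_apply]
  have hsq : (1 - 1 / a ^ 2) * ‖x‖ ^ 2 ≤ ‖R.starProjection x‖ ^ 2 := by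
    have hfar : ‖x - R.starProjection x‖ ^ 2 ≤ ‖x‖ ^ 2 / a ^ 2 := by
      rw [le_div_iff₀ (by positivity), mul_comm]
      exact le_trans (by gcongr; exact R.norm_sub_starProjection_le x hyR) hxy
    have hpyth := R.norm_sq_eq_norm_starProjection_sq_add x
    calc (1 - 1 / a ^ 2) * ‖x‖ ^ 2 = ‖x‖ ^ 2 - ‖x‖ ^ 2 / a ^ 2 := by ring
      _ ≤ ‖R.starProjection x‖ ^ 2 := by linarith
  calc √(1 - 1 / a ^ 2) * ‖x‖ = √((1 - 1 / a ^ 2) * ‖x‖ ^ 2) := by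
        rw [Real.sqrt_mul' _ (sq_nonneg _), Real.sqrt_sq (norm_nonneg _)]
    _ ≤ √(‖R.starProjection x‖ ^ 2) := Real.sqrt_le_sqrt hsq
    _ = ‖R.starProjection x‖ := Real.sqrt_sq (norm_nonneg _)
end

section
/- If A and B are normal complex n×n matrices, then for every closed disk S ⊆ ℂ, the number of eigenvalues of A in S (counted with multiplicity) and the number of eigenvalues of B in S (counted with multiplicity) differ by at most rank(A − B). -/
/-!
A normal matrix is unitarily diagonalisable. Let `V` be spanned by the eigenvectors of `A` whose
eigenvalues lie in the disk `‖z - a‖ ≤ r`, and `W` by the eigenvectors of `B` whose eigenvalues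
lie outside it. Expanding in the orthonormal eigenbases, `‖(A - a) x‖ ≤ r ‖x‖` on `V` while
`‖(B - a) x‖ > r ‖x‖` on `W ∖ {0}`, and `A x = B x` on `ker (A - B)`; hence
`V ⊓ W ⊓ ker (A - B) = ⊥`, so `dim V + dim W + dim ker (A - B) ≤ 2 n`, that is
`N_A + (n - N_B) + (n - rank (A - B)) ≤ 2 n` where `N_A`, `N_B` count the eigenvalues in the
disk. Exchanging `A` and `B` gives the other inequality.
-/

open Module Submodule Finset

theorem Submodule.finrank_add_finrank_add_finrank_le_of_disjoint {K V : Type*} [DivisionRing K]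
    [AddCommGroup V] [Module K V] [FiniteDimensional K V] {U W X : Submodule K V}
    (h : Disjoint (U ⊓ W) X) :
    finrank K U + finrank K W + finrank K X ≤ 2 * finrank K V := by
  have := U.finrank_sup_add_finrank_inf_eq W
  have := (U ⊔ W).finrank_le
  have := Submodule.finrank_add_finrank_le_of_disjoint h
  omega

theorem Multiset.card_filter_map_val {α β : Type*} (s : Finset α) (f : α → β) (p : β → Prop)
    [DecidablePred p] : ((s.val.map f).filter p).card = (s.filter (p ∘ f)).card := by
  rw [Multiset.filter_map, Multiset.card_map]
  rfl

theorem LinearMap.roots_charpoly_of_apply_basis_eq_smul {K M ι : Type*} [Field K]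
    [AddCommGroup M] [Module K M] [FiniteDimensional K M] [Fintype ι] [DecidableEq ι]
    (b : Basis ι K M) {T : M →ₗ[K] M} {d : ι → K} (hT : ∀ i, T (b i) = d i • b i) :
    T.charpoly.roots = univ.val.map d := by
  have hdiag : T.toMatrix b b = Matrix.diagonal d := by
    ext i j
    simp [toMatrix_apply, hT, Matrix.diagonal_apply, Finsupp.single_apply, eq_comm]
    grind
  rw [← charpoly_toMatrix T b, hdiag, Matrix.charpoly_diagonal, Polynomial.roots_prod _ _ (by
      simp [prod_ne_zero_iff, Polynomial.X_sub_C_ne_zero])]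
  simp

theorem DirectSum.IsInternal.exists_orthonormalBasis_mem
    {𝕜 E ι : Type*} [RCLike 𝕜] [NormedAddCommGroup E] [InnerProductSpace 𝕜 E]
    [FiniteDimensional 𝕜 E] {n : ℕ} (hn : finrank 𝕜 E = n) [DecidableEq ι]
    {V : ι → Submodule 𝕜 E} (hV : DirectSum.IsInternal V)
    (hV' : OrthogonalFamily 𝕜 (fun i => V i) fun i => (V i).subtypeₗᵢ) :
    ∃ (b : OrthonormalBasis (Fin n) 𝕜 E) (σ : Fin n → ι), ∀ j, b j ∈ V (σ j) := by
  have : Fintype {i // V i ≠ ⊥} := hV.submodule_iSupIndep.fintypeNeBotOfFiniteDimensional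
  have hW := DirectSum.isInternal_ne_bot_iff.mpr hV
  have hW' : OrthogonalFamily 𝕜 (fun i : {i // V i ≠ ⊥} => V i) fun i => (V i).subtypeₗᵢ :=
    hV'.comp Subtype.val_injective
  exact ⟨hW.subordinateOrthonormalBasis hn hW',
    fun j => (hW.subordinateOrthonormalBasisIndex hn j hW').val,
    fun j => hW.subordinateOrthonormalBasis_subordinate hn j hW'⟩

open ComplexStarModule in
theorem LinearMap.exists_orthonormalBasis_apply_eq_smul_of_isStarNormal_s9
    {E : Type*} [NormedAddCommGroup E] [InnerProductSpace ℂ E] [FiniteDimensional ℂ E]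
    {n : ℕ} (hn : finrank ℂ E = n) (T : E →ₗ[ℂ] E) [IsStarNormal T] :
    ∃ (b : OrthonormalBasis (Fin n) ℂ E) (d : Fin n → ℂ), ∀ j, T (b j) = d j • b j := by
  have hRe : (ℜ T : E →ₗ[ℂ] E).IsSymmetric := (isSymmetric_iff_isSelfAdjoint _).2 (ℜ T).2
  have hIm : (ℑ T : E →ₗ[ℂ] E).IsSymmetric := (isSymmetric_iff_isSelfAdjoint _).2 (ℑ T).2
  obtain ⟨b, σ, hb⟩ := (hIm.directSum_isInternal_of_commute hRe
    (Commute.realPart_imaginaryPart T).symm).exists_orthonormalBasis_mem hn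
    (hIm.orthogonalFamily_eigenspace_inf_eigenspace hRe)
  refine ⟨b, fun j => (σ j).1 + Complex.I * (σ j).2, fun j => ?_⟩
  obtain ⟨hIm_j, hRe_j⟩ := Submodule.mem_inf.mp (hb j)
  conv_lhs => rw [← realPart_add_I_smul_imaginaryPart T]
  rw [LinearMap.add_apply, LinearMap.smul_apply, Module.End.mem_eigenspace_iff.mp hRe_j,
    Module.End.mem_eigenspace_iff.mp hIm_j, smul_smul, add_smul]

namespace OrthonormalBasis

variable {𝕜 E ι : Type*} [RCLike 𝕜] [NormedAddCommGroup E] [InnerProductSpace 𝕜 E] [Fintype ι]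
  (b : OrthonormalBasis ι 𝕜 E)

theorem norm_sq_eq_sum_norm_sq_repr (x : E) : ‖x‖ ^ 2 = ∑ j, ‖b.repr x j‖ ^ 2 := by
  rw [← b.repr.norm_map, EuclideanSpace.norm_sq_eq]

theorem finrank_span_image (s : Finset ι) : finrank 𝕜 (span 𝕜 (b '' s)) = s.card := by
  rw [Set.image_eq_range, finrank_span_eq_card (b := fun j : (s : Set ι) => b j)
    (b.orthonormal.linearIndependent.comp _ Subtype.val_injective)]
  simp

variable {b} {T : E →ₗ[𝕜] E} {d : ι → 𝕜}

theorem repr_apply_of_apply_eq_smul (hT : ∀ j, T (b j) = d j • b j) (x : E) (j : ι) :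
    b.repr (T x) j = d j * b.repr x j := by
  classical
  conv_lhs => rw [← b.sum_repr x]
  simp [map_sum, hT, smul_smul, b.repr_self, Pi.single_apply, mul_comm]

theorem norm_sq_apply_eq_sum (hT : ∀ j, T (b j) = d j • b j) (x : E) :
    ‖T x‖ ^ 2 = ∑ j, ‖d j‖ ^ 2 * ‖b.repr x j‖ ^ 2 := by
  simp only [b.norm_sq_eq_sum_norm_sq_repr (T x), repr_apply_of_apply_eq_smul hT, norm_mul,
    mul_pow]

theorem repr_eq_zero_of_mem_span {s : Set ι} {x : E} (hx : x ∈ span 𝕜 (b '' s)) {j : ι}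
    (hj : j ∉ s) : b.repr x j = 0 := by
  rw [← OrthonormalBasis.coe_toBasis, Basis.mem_span_image] at hx
  rw [← OrthonormalBasis.coe_toBasis_repr_apply]
  exact Finsupp.notMem_support_iff.mp fun h => hj (hx h)

theorem norm_sq_apply_le_of_mem_span (hT : ∀ j, T (b j) = d j • b j) {s : Set ι} {r : ℝ}
    (hs : ∀ j ∈ s, ‖d j‖ ≤ r) {x : E} (hx : x ∈ span 𝕜 (b '' s)) :
    ‖T x‖ ^ 2 ≤ r ^ 2 * ‖x‖ ^ 2 := by
  rw [norm_sq_apply_eq_sum hT, b.norm_sq_eq_sum_norm_sq_repr, mul_sum]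
  refine sum_le_sum fun j _ => ?_
  by_cases hj : j ∈ s
  · gcongr
    exact hs j hj
  · simp [repr_eq_zero_of_mem_span hx hj]

theorem lt_norm_sq_apply_of_mem_span (hT : ∀ j, T (b j) = d j • b j) {s : Set ι} {r : ℝ}
    (hr : 0 ≤ r) (hs : ∀ j ∈ s, r < ‖d j‖) {x : E} (hx : x ∈ span 𝕜 (b '' s)) (hx₀ : x ≠ 0) :
    r ^ 2 * ‖x‖ ^ 2 < ‖T x‖ ^ 2 := by
  obtain ⟨j₀, hj₀⟩ : ∃ j, b.repr x j ≠ 0 := by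
    by_contra! h
    exact hx₀ (b.repr.map_eq_zero_iff.mp (by ext j; exact h j))
  have hj₀s : j₀ ∈ s := by_contra fun h => hj₀ (repr_eq_zero_of_mem_span hx h)
  rw [norm_sq_apply_eq_sum hT, b.norm_sq_eq_sum_norm_sq_repr, mul_sum]
  refine sum_lt_sum (fun j _ => ?_) ⟨j₀, mem_univ _, ?_⟩
  · by_cases hj : j ∈ s
    · gcongr
      exact (hs j hj).le
    · simp [repr_eq_zero_of_mem_span hx hj]
  · gcongr
    exact hs j₀ hj₀s

end OrthonormalBasis

theorem OrthonormalBasis.card_filter_le_card_filter_add_finrank_range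
    {𝕜 E ι ι' : Type*} [RCLike 𝕜] [NormedAddCommGroup E] [InnerProductSpace 𝕜 E]
    [FiniteDimensional 𝕜 E] [Fintype ι] [Fintype ι']
    (b : OrthonormalBasis ι 𝕜 E) (b' : OrthonormalBasis ι' 𝕜 E) {T T' : E →ₗ[𝕜] E}
    {d : ι → 𝕜} {d' : ι' → 𝕜} (hT : ∀ j, T (b j) = d j • b j) (hT' : ∀ j, T' (b' j) = d' j • b' j)
    (a : 𝕜) {r : ℝ} (hr : 0 ≤ r) :
    (univ.filter fun j => ‖d j - a‖ ≤ r).card ≤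
      (univ.filter fun j => ‖d' j - a‖ ≤ r).card + finrank 𝕜 (LinearMap.range (T - T')) := by
  have hTa : ∀ j, (T - a • 1) (b j) = (d j - a) • b j := by simp [hT, sub_smul]
  have hTa' : ∀ j, (T' - a • 1) (b' j) = (d' j - a) • b' j := by simp [hT', sub_smul]
  set s := univ.filter fun j => ‖d j - a‖ ≤ r
  set s' := univ.filter fun j => ¬‖d' j - a‖ ≤ r
  have hdisj : Disjoint (span 𝕜 (b '' s) ⊓ span 𝕜 (b' '' s')) (LinearMap.ker (T - T')) := by
    rw [Submodule.disjoint_def]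
    rintro x ⟨hx, hx'⟩ hxK
    by_contra hx₀
    have hTT' : (T - a • 1) x = (T' - a • 1) x := by
      simpa [sub_eq_zero] using hxK
    have hle := b.norm_sq_apply_le_of_mem_span hTa (r := r) (by simp [s]) hx
    have hlt := b'.lt_norm_sq_apply_of_mem_span hTa' hr (by simp [s']) hx' hx₀
    rw [hTT'] at hle
    linarith
  have hdim := Submodule.finrank_add_finrank_add_finrank_le_of_disjoint hdisj
  rw [b.finrank_span_image, b'.finrank_span_image] at hdim
  have hrank := (T - T').finrank_range_add_finrank_ker
  have hcard' : (univ.filter fun j => ‖d' j - a‖ ≤ r).card + s'.card = finrank 𝕜 E := by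
    rw [card_filter_add_card_filter_not, card_univ, finrank_eq_card_basis b'.toBasis]
  omega

namespace Matrix

variable {𝕜 ι : Type*} [RCLike 𝕜] [Fintype ι] [DecidableEq ι]

instance isStarNormal_toEuclideanLin (A : Matrix ι ι 𝕜) [IsStarNormal A] :
    IsStarNormal (toEuclideanLin A) :=
  ⟨by
    rw [LinearMap.star_eq_adjoint, ← toEuclideanLin_conjTranspose_eq_adjoint]
    change toLpLin 2 2 Aᴴ ∘ₗ toLpLin 2 2 A = toLpLin 2 2 A ∘ₗ toLpLin 2 2 Aᴴ
    rw [← toLpLin_mul_same, ← toLpLin_mul_same, ← star_eq_conjTranspose, star_comm_self']⟩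

theorem charpoly_toEuclideanLin (A : Matrix ι ι 𝕜) : (toEuclideanLin A).charpoly = A.charpoly :=
  charpoly_toLin A (PiLp.basisFun 2 𝕜 ι)

theorem rank_eq_finrank_range_toEuclideanLin (M : Matrix ι ι 𝕜) :
    M.rank = finrank 𝕜 (LinearMap.range (toEuclideanLin M)) :=
  M.rank_eq_finrank_range_toLin (PiLp.basisFun 2 𝕜 ι) (PiLp.basisFun 2 𝕜 ι)

theorem exists_orthonormalBasis_eigenvectors_of_isStarNormal (A : Matrix ι ι ℂ) [IsStarNormal A] :
    ∃ (b : OrthonormalBasis (Fin (Fintype.card ι)) ℂ (EuclideanSpace ℂ ι)) (d : Fin _ → ℂ),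
      (∀ j, toEuclideanLin A (b j) = d j • b j) ∧ A.charpoly.roots = univ.val.map d := by
  obtain ⟨b, d, hb⟩ :=
    (toEuclideanLin A).exists_orthonormalBasis_apply_eq_smul_of_isStarNormal_s9 finrank_euclideanSpace
  refine ⟨b, d, hb, ?_⟩
  rw [← charpoly_toEuclideanLin]
  refine LinearMap.roots_charpoly_of_apply_basis_eq_smul b.toBasis fun j => ?_
  rw [OrthonormalBasis.coe_toBasis]
  exact hb j

end Matrix

/-- Corollary: for normal matrices `A`, `B`, the numbers of eigenvalues
(with multiplicity) in any closed disk differ by at most `rank (A - B)`. -/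
theorem stmt_9 {n : ℕ} (A B : Matrix (Fin n) (Fin n) ℂ)
    (hA : A * A.conjTranspose = A.conjTranspose * A)
    (hB : B * B.conjTranspose = B.conjTranspose * B)
    (a : ℂ) (r : ℝ) (hr : 0 ≤ r) :
    |((A.charpoly.roots.filter fun z => ‖z - a‖ ≤ r).card : ℤ) -
      ((B.charpoly.roots.filter fun z => ‖z - a‖ ≤ r).card : ℤ)| ≤
      (A - B).rank := by
  have : IsStarNormal A := ⟨hA.symm⟩
  have : IsStarNormal B := ⟨hB.symm⟩
  obtain ⟨bA, dA, hbA, hrootsA⟩ := A.exists_orthonormalBasis_eigenvectors_of_isStarNormal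
  obtain ⟨bB, dB, hbB, hrootsB⟩ := B.exists_orthonormalBasis_eigenvectors_of_isStarNormal
  have hAB := bA.card_filter_le_card_filter_add_finrank_range bB hbA hbB a hr
  have hBA := bB.card_filter_le_card_filter_add_finrank_range bA hbB hbA a hr
  rw [← LinearMap.range_neg, neg_sub] at hBA
  rw [hrootsA, hrootsB, Multiset.card_filter_map_val, Multiset.card_filter_map_val,
    Matrix.rank_eq_finrank_range_toEuclideanLin, map_sub, abs_sub_le_iff]
  simp only [Function.comp_def]
  omega
end

section
/- Let A be a Hermitian n×n matrix with simple spectrum α₁ < α₂ < ... < αₙ, and let β₁, ..., βₙ be real numbers strictly interlacing with the αᵢ (i.e., α₁ < β₁ < α₂ < β₂ < ... < αₙ < βₙ). Then there exists a Hermitian matrix B with eigenvalues exactly β₁, ..., βₙ such that rank(A − B) = 1. -/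
/-!
Diagonalize `A = U diag(e) U*` and look for `B = A + v v*` with `v = U w`. By the matrix
determinant lemma, `charpoly (diag e + w w*) = p - ∑ⱼ |wⱼ|² p / (X - eⱼ)` with `p = ∏ (X - eᵢ)`,
while Lagrange interpolation of `q - p` at the nodes `eⱼ`, where `q = ∏ (X - βᵢ)`, shows that
this equals `q` exactly when `|wⱼ|² = -q(eⱼ) / p'(eⱼ)`. Strict interlacing makes all these
weights positive, so they have square roots; then `A - B = -v v*` has rank one.
-/

open Polynomial

open Finset Lagrange

namespace Lagrange

variable {R ι : Type*} [CommRing R]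

theorem map_nodal {S : Type*} [CommRing S] (f : R →+* S) (s : Finset ι) (v : ι → R) :
    (nodal s v).map f = nodal s (f ∘ v) := by
  simp [nodal, Polynomial.map_prod]

theorem injective_of_eval_derivative_nodal_ne_zero [Fintype ι] [DecidableEq ι] {v : ι → R}
    (hv : ∀ k, (nodal univ v).derivative.eval (v k) ≠ 0) : Function.Injective v := by
  intro i j hij
  by_contra hne
  apply hv i
  rw [eval_nodal_derivative_eval_node_eq (mem_univ i), eval_nodal]
  exact prod_eq_zero (mem_erase.2 ⟨Ne.symm hne, mem_univ j⟩) (sub_eq_zero.2 hij)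

-- Lagrange interpolation of `nodal s b - nodal s d`, of degree `< #s`, at the nodes `d`.
theorem nodal_eq_nodal_add_sum {K : Type*} [Field K] [DecidableEq ι] {s : Finset ι} {d : ι → K}
    (hd : Set.InjOn d s) (b : ι → K) :
    nodal s b = nodal s d + ∑ j ∈ s,
      C ((nodal s b).eval (d j) / (nodal s d).derivative.eval (d j)) * nodal (s.erase j) d := by
  have hdeg : (nodal s b - nodal s d).degree < #s := by
    rw [← degree_nodal (v := b)]
    exact degree_sub_lt_left (by simp) nodal_ne_zero
      (by rw [nodal_monic.leadingCoeff, nodal_monic.leadingCoeff])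
  rw [← sub_eq_iff_eq_add', eq_interpolate hd hdeg, interpolate_apply]
  refine sum_congr rfl fun j hj => ?_
  rw [basis_eq_prod_sub_inv_mul_nodal_div hj, ← nodal_erase_eq_nodal_div hj,
    nodalWeight_eq_eval_derivative_nodal hj, eval_sub, eval_nodal_at_node hj, sub_zero,
    ← mul_assoc, ← C_mul, div_eq_mul_inv]

end Lagrange

theorem eval_nodal_mul_eval_derivative_nodal_neg {K ι : Type*} [Field K] [LinearOrder K]
    [IsStrictOrderedRing K] [Fintype ι] [LinearOrder ι] {α β : ι → K} (hα : StrictMono α)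
    (hαβ : ∀ i, α i < β i) (hβα : ∀ i j, i < j → β i < α j) {x : K}
    (hx : (nodal univ α).eval x = 0) :
    (nodal univ β).eval x * (nodal univ α).derivative.eval x < 0 := by
  obtain ⟨m, -, hm⟩ := prod_eq_zero_iff.1 (eval_nodal.symm.trans hx)
  rw [sub_eq_zero.1 hm, eval_nodal_derivative_eval_node_eq (mem_univ m), eval_nodal, eval_nodal,
    ← mul_prod_erase univ _ (mem_univ m), mul_assoc, ← prod_mul_distrib]
  refine mul_neg_of_neg_of_pos (sub_neg.2 (hαβ m)) (prod_pos fun i hi => ?_)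
  rcases lt_or_gt_of_ne (ne_of_mem_erase hi) with h | h
  · exact mul_pos (sub_pos.2 (hβα i m h)) (sub_pos.2 (hα h))
  · exact mul_pos_of_neg_of_neg (sub_neg.2 ((hα h).trans (hαβ i))) (sub_neg.2 (hα h))

namespace Matrix

theorem rank_vecMulVec_eq_one {K m n : Type*} [Field K] [Fintype n] {u : m → K} {v : n → K}
    (hu : u ≠ 0) (hv : v ≠ 0) : (vecMulVec u v).rank = 1 := by
  classical
  refine le_antisymm (rank_vecMulVec_le u v) (Nat.one_le_iff_ne_zero.2 fun h0 => ?_)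
  obtain ⟨i, hi⟩ := Function.ne_iff.1 hu
  obtain ⟨j, hj⟩ := Function.ne_iff.1 hv
  rw [rank, Submodule.finrank_eq_zero, LinearMap.range_eq_bot, ← toLin'_apply'] at h0
  have hzero : vecMulVec u v = 0 := toLin'.injective (by rw [h0, map_zero])
  exact mul_ne_zero hi hj (congrFun (congrFun hzero i) j)

section StarRing

variable {R n : Type*} [CommRing R] [StarRing R]

theorem isHermitian_vecMulVec_star (v : n → R) : (vecMulVec v (star v)).IsHermitian := by
  ext i j
  simp [vecMulVec_apply, mul_comm]

variable [Fintype n]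

theorem mul_vecMulVec_star_mul_star (U : Matrix n n R) (w : n → R) :
    U * vecMulVec w (star w) * star U = vecMulVec (U *ᵥ w) (star (U *ᵥ w)) := by
  rw [mul_vecMulVec, vecMulVec_mul, star_mulVec, star_eq_conjTranspose]

theorem charpoly_unitary_mul_mul_star [DecidableEq n] (U : unitary (Matrix n n R))
    (M : Matrix n n R) : ((U : Matrix n n R) * M * star (U : Matrix n n R)).charpoly = M.charpoly := by
  rw [charpoly_mul_comm, ← Matrix.mul_assoc, Unitary.coe_star_mul_self, Matrix.one_mul]

end StarRing

variable {K n : Type*} [Field K] [Fintype n] [DecidableEq n]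

theorem det_diagonal_add_vecMulVec {d : n → K} (hd : ∀ i, d i ≠ 0) (u v : n → K) :
    (diagonal d + vecMulVec u v).det = ∏ i, d i + ∑ j, u j * v j * ∏ i ∈ univ.erase j, d i := by
  have hfactor : diagonal d + vecMulVec u v = diagonal d * (1 + vecMulVec (d⁻¹ * u) v) := by
    rw [Matrix.mul_add, Matrix.mul_one]
    ext i j
    simp [vecMulVec_apply, diagonal_mul, ← mul_assoc, mul_inv_cancel₀ (hd i)]
  rw [hfactor, det_mul, det_diagonal, vecMulVec_eq Unit, det_one_add_replicateCol_mul_replicateRow,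
    mul_add, mul_one, dotProduct, mul_sum]
  congr 1
  refine sum_congr rfl fun j _ => ?_
  rw [← mul_prod_erase univ d (mem_univ j), Pi.mul_apply, Pi.inv_apply]
  field_simp [hd j]

theorem charpoly_diagonal_add_vecMulVec (d u v : n → K) :
    (diagonal d + vecMulVec u v).charpoly
      = nodal univ d - ∑ j, C (u j * v j) * nodal (univ.erase j) d := by
  have hcharmatrix : (charmatrix (diagonal d + vecMulVec u v)).map (algebraMap K[X] (RatFunc K))
      = diagonal (fun i => algebraMap K[X] (RatFunc K) (X - C (d i)))
        + vecMulVec (fun i => -algebraMap K[X] (RatFunc K) (C (u i)))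
            (fun i => algebraMap K[X] (RatFunc K) (C (v i))) := by
    ext i j
    rcases eq_or_ne i j with rfl | hij
    · simp [charmatrix_apply_eq, vecMulVec_apply]; ring
    · simp [vecMulVec_apply, hij]
  have hdiag : ∀ i, algebraMap K[X] (RatFunc K) (X - C (d i)) ≠ 0 := fun i =>
    (map_ne_zero_iff _ (RatFunc.algebraMap_injective K)).2 (X_sub_C_ne_zero (d i))
  apply RatFunc.algebraMap_injective K
  rw [charpoly, RingHom.map_det, RingHom.mapMatrix_apply, hcharmatrix,
    det_diagonal_add_vecMulVec hdiag]
  simp only [nodal, map_add, map_neg, map_prod, map_sum, map_mul, neg_mul, sum_neg_distrib,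
    sub_eq_add_neg]

theorem charpoly_diagonal_add_vecMulVec_eq_nodal {d : n → K} (hd : Function.Injective d)
    {u v : n → K} (b : n → K)
    (huv : ∀ j, u j * v j = -((nodal univ b).eval (d j) / (nodal univ d).derivative.eval (d j))) :
    (diagonal d + vecMulVec u v).charpoly = nodal univ b := by
  rw [charpoly_diagonal_add_vecMulVec, nodal_eq_nodal_add_sum hd.injOn b]
  simp [huv, sub_eq_add_neg]

theorem IsHermitian.nodal_eigenvalues_eq {𝕜 : Type*} [RCLike 𝕜] {A : Matrix n n 𝕜}
    (hA : A.IsHermitian) {α : n → ℝ} (hα : A.charpoly = ∏ i, (X - C (α i : 𝕜))) :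
    nodal univ hA.eigenvalues = nodal univ α := by
  apply Polynomial.map_injective (algebraMap ℝ 𝕜) (algebraMap ℝ 𝕜).injective
  rw [map_nodal, map_nodal]
  exact hA.charpoly_eq.symm.trans hα

theorem exists_charpoly_diagonal_add_vecMulVec_star_eq_nodal {𝕜 : Type*} [RCLike 𝕜] {e b : n → ℝ}
    (hsign : ∀ k, (nodal univ b).eval (e k) * (nodal univ e).derivative.eval (e k) < 0) :
    ∃ w : n → 𝕜, (∀ k, w k ≠ 0) ∧
      (diagonal (RCLike.ofReal ∘ e) + vecMulVec w (star w)).charpoly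
        = nodal univ (RCLike.ofReal ∘ b) := by
  have he : Function.Injective e :=
    injective_of_eval_derivative_nodal_ne_zero fun k => right_ne_zero_of_mul (hsign k).ne
  set t : n → ℝ := fun k => -((nodal univ b).eval (e k) / (nodal univ e).derivative.eval (e k))
  have ht : ∀ k, 0 < t k := fun k => neg_pos.2 (div_neg_iff.2 (mul_neg_iff.1 (hsign k)))
  refine ⟨fun k => (√(t k) : 𝕜), fun k => RCLike.ofReal_ne_zero.2 (Real.sqrt_pos.2 (ht k)).ne',
    charpoly_diagonal_add_vecMulVec_eq_nodal (RCLike.ofReal_injective.comp he) _ fun k => ?_⟩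
  have hsq : (√(t k) : 𝕜) * star (√(t k) : 𝕜) = (t k : 𝕜) := by
    rw [RCLike.star_def, RCLike.conj_ofReal, ← RCLike.ofReal_mul, Real.mul_self_sqrt (ht k).le]
  rw [eval_nodal_derivative_eval_node_eq (mem_univ k), Pi.star_apply, hsq]
  simp only [t, Function.comp_apply, eval_nodal, eval_nodal_derivative_eval_node_eq (mem_univ k)]
  push_cast
  rfl

end Matrix

open Matrix

/-- Lemma (converse Cauchy interlacing): a Hermitian matrix with simple
spectrum admits a rank-one Hermitian perturbation realizing any strictly
interlacing spectrum. -/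
theorem stmt_10 {n : ℕ} (hn : 0 < n) (A : Matrix (Fin n) (Fin n) ℂ)
    (hA : A.IsHermitian) (α β : Fin n → ℝ)
    (hαmono : StrictMono α)
    (hspec : A.charpoly = ∏ i, (X - C (α i : ℂ)))
    (hint1 : ∀ i, α i < β i)
    (hint2 : ∀ i j : Fin n, i < j → β i < α j) :
    ∃ B : Matrix (Fin n) (Fin n) ℂ, B.IsHermitian ∧
      B.charpoly = ∏ i, (X - C (β i : ℂ)) ∧ (A - B).rank = 1 := by
  set e := hA.eigenvalues
  have hnodal : nodal univ e = nodal univ α := hA.nodal_eigenvalues_eq hspec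
  have hsign : ∀ k, (nodal univ β).eval (e k) * (nodal univ e).derivative.eval (e k) < 0 := by
    intro k
    rw [hnodal]
    exact eval_nodal_mul_eval_derivative_nodal_neg hαmono hint1 hint2
      (hnodal ▸ eval_nodal_at_node (mem_univ k))
  obtain ⟨w, hw, hcharpoly⟩ := exists_charpoly_diagonal_add_vecMulVec_star_eq_nodal (𝕜 := ℂ) hsign
  set U : Matrix (Fin n) (Fin n) ℂ := (hA.eigenvectorUnitary : Matrix (Fin n) (Fin n) ℂ)
  set v := U *ᵥ w
  have hv : v ≠ 0 := fun hv0 => hw ⟨0, hn⟩ <| by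
    rw [← one_mulVec w, ← Unitary.coe_star_mul_self hA.eigenvectorUnitary, ← mulVec_mulVec,
      show U *ᵥ w = 0 from hv0, mulVec_zero, Pi.zero_apply]
  have hB : A + vecMulVec v (star v)
      = U * (diagonal (RCLike.ofReal ∘ e) + vecMulVec w (star w)) * star U := by
    conv_lhs => rw [hA.spectral_theorem]
    rw [Unitary.conjStarAlgAut_apply, Matrix.mul_add, Matrix.add_mul, mul_vecMulVec_star_mul_star]
  refine ⟨A + vecMulVec v (star v), hA.add (isHermitian_vecMulVec_star v), ?_, ?_⟩
  · rw [hB, charpoly_unitary_mul_mul_star, hcharpoly]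
    rfl
  · rw [sub_add_cancel_left, ← neg_vecMulVec]
    exact rank_vecMulVec_eq_one (neg_ne_zero.2 hv) (star_ne_zero.2 hv)
end

section
/- Let A = {α₁,...,αₙ} and B = {β₁,...,βₙ} be disjoint finite subsets of ℝ, each of size n, that strictly interlace (α₁ < β₁ < α₂ < β₂ < ... or β₁ < α₁ < β₂ < α₂ < ...). Write P_B = P_A − Σ_{α∈A} x_α · P_{A∖{α}}, where P_S(λ) = Π_{s∈S}(λ − s) and the coefficients x_α are uniquely determined. Then all the x_α have the same sign. -/
/-!
Evaluating the expansion at the node `α i` kills every term but one, so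
`x i · ∏_{j≠i} (α i - α j) = -P_B(α i) = (β i - α i) · ∏_{j≠i} (α i - β j)`.
Interlacing means that for `j ≠ i` the points `α j` and `β j` lie on the same side of `α i`,
so the two products over `j ≠ i` have the same sign, and `x i` has the sign of `β i - α i`,
which does not depend on `i`.
-/

open Polynomial Finset

variable {ι : Type*} [Fintype ι] [DecidableEq ι]

section
variable {R : Type*} [CommRing R]

lemma eval_sum_C_mul_prod_erase_at_node (a c : ι → R) (i : ι) :
    eval (a i) (∑ k, C (c k) * ∏ j ∈ univ.erase k, (X - C (a j))) =
      c i * ∏ j ∈ univ.erase i, (a i - a j) := by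
  rw [eval_finsetSum, sum_eq_single i]
  · simp [eval_prod]
  · intro k _ hk
    rw [eval_mul, eval_prod,
      prod_eq_zero (mem_erase.2 ⟨hk.symm, mem_univ i⟩) (by simp), mul_zero]
  · simp

lemma prod_sub_eq_neg_coeff_mul_prod_erase (a b c : ι → R)
    (h : ∏ j, (X - C (b j)) =
      ∏ j, (X - C (a j)) - ∑ k, C (c k) * ∏ j ∈ univ.erase k, (X - C (a j)))
    (i : ι) : ∏ j, (a i - b j) = -(c i * ∏ j ∈ univ.erase i, (a i - a j)) := by
  have h := congrArg (eval (a i)) h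
  simp only [eval_sub, eval_sum_C_mul_prod_erase_at_node, eval_prod, eval_X, eval_C] at h
  rwa [prod_eq_zero (f := fun j => a i - a j) (mem_univ i) (sub_self _), zero_sub] at h

end

lemma sign_coeff_eq_sign_sub (α β c : ι → ℝ)
    (h : ∏ j, (X - C (β j)) =
      ∏ j, (X - C (α j)) - ∑ k, C (c k) * ∏ j ∈ univ.erase k, (X - C (α j)))
    (i : ι) (hsep : ∀ j ∈ univ.erase i, 0 < (α i - β j) * (α i - α j)) :
    SignType.sign (c i) = SignType.sign (β i - α i) := by
  set D := ∏ j ∈ univ.erase i, (α i - α j)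
  have hD : D ≠ 0 := prod_ne_zero_iff.2 fun j hj => right_ne_zero_of_mul (hsep j hj).ne'
  have hP := prod_sub_eq_neg_coeff_mul_prod_erase α β c h i
  rw [← mul_prod_erase univ _ (mem_univ i)] at hP
  have hcD :
      c i * D ^ 2 = (β i - α i) * ∏ j ∈ univ.erase i, (α i - β j) * (α i - α j) := by
    rw [prod_mul_distrib]; linear_combination D * hP
  have := congrArg SignType.sign hcD
  rwa [sign_mul, sign_mul, sign_pos (pow_two_pos_of_ne_zero hD), sign_pos (prod_pos hsep),
    mul_one, mul_one] at this

lemma interlace_mul_pos {n : ℕ} {α β : Fin n → ℝ} (hα : StrictMono α)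
    (hint : ((∀ i, α i < β i) ∧ ∀ i j : Fin n, i < j → β i < α j) ∨
            ((∀ i, β i < α i) ∧ ∀ i j : Fin n, i < j → α i < β j))
    {i j : Fin n} (hji : j ≠ i) : 0 < (α i - β j) * (α i - α j) := by
  rcases hji.lt_or_gt with hlt | hgt
  · have : β j < α i := hint.elim (fun h => h.2 j i hlt) (fun h => (h.1 j).trans (hα hlt))
    have := hα hlt
    exact mul_pos (by linarith) (by linarith)
  · have : α i < β j := hint.elim (fun h => (hα hgt).trans (h.1 j)) (fun h => h.2 i j hgt)
    have := hα hgt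
    exact mul_pos_of_neg_of_neg (by linarith) (by linarith)

theorem stmt_11_general {n : ℕ} (α β : Fin n → ℝ)
    (hα : StrictMono α)
    (hint : ((∀ i, α i < β i) ∧ ∀ i j : Fin n, i < j → β i < α j) ∨
            ((∀ i, β i < α i) ∧ ∀ i j : Fin n, i < j → α i < β j))
    (x : Fin n → ℝ)
    (hx : (∏ i, (X - C (β i))) =
      (∏ i, (X - C (α i))) -
        ∑ i, C (x i) * ∏ j ∈ Finset.univ.erase i, (X - C (α j))) :
    (∀ i, 0 < x i) ∨ (∀ i, x i < 0) := by
  have hsign (i : Fin n) : SignType.sign (x i) = SignType.sign (β i - α i) :=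
    sign_coeff_eq_sign_sub α β x hx i fun _ hj => interlace_mul_pos hα hint (mem_erase.1 hj).1
  rcases hint with ⟨hαβ, -⟩ | ⟨hβα, -⟩
  · exact .inl fun i => sign_eq_one_iff.1 <| (hsign i).trans (sign_pos (sub_pos.2 (hαβ i)))
  · exact .inr fun i => sign_eq_neg_one_iff.1 <| (hsign i).trans (sign_neg (sub_neg.2 (hβα i)))

/-- Proposition: if `A = {α i}` and `B = {β i}` strictly interlace, then the
coefficients `x i` in the expansion
`P_B = P_A - ∑ i, x i • P_{A \ {α i}}` all have the same sign. -/
theorem stmt_11 {n : ℕ} (α β : Fin n → ℝ)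
    (hα : StrictMono α) (hβ : StrictMono β)
    (hint : ((∀ i, α i < β i) ∧ ∀ i j : Fin n, i < j → β i < α j) ∨
            ((∀ i, β i < α i) ∧ ∀ i j : Fin n, i < j → α i < β j))
    (x : Fin n → ℝ)
    (hx : (∏ i, (X - C (β i))) =
      (∏ i, (X - C (α i))) -
        ∑ i, C (x i) * ∏ j ∈ Finset.univ.erase i, (X - C (α j))) :
    (∀ i, 0 < x i) ∨ (∀ i, x i < 0) :=
  stmt_11_general α β hα hint x hx
end

section
/- For any complex n×n matrix A there exists a unitary matrix U such that rank(A − U) ≤ rank(A*A − I). -/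
/-!
On `K = ker (A*A - 1)` the map `A` preserves norms, so `A|_K` extends to a unitary `U` of the
whole space. Then `A - U` vanishes on `K`, hence by rank–nullity
`rank (A - U) ≤ n - dim K = rank (A*A - 1)`.
-/

open Module

theorem LinearMap.finrank_range_le_of_ker_le {K V W W' : Type*} [DivisionRing K]
    [AddCommGroup V] [Module K V] [FiniteDimensional K V] [AddCommGroup W] [Module K W]
    [AddCommGroup W'] [Module K W'] {f : V →ₗ[K] W} {g : V →ₗ[K] W'} (h : ker g ≤ ker f) :
    finrank K (range f) ≤ finrank K (range g) := by
  have := Submodule.finrank_mono h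
  have := f.finrank_range_add_finrank_ker
  have := g.finrank_range_add_finrank_ker
  omega

section InnerProductSpace

variable {𝕜 H : Type*} [RCLike 𝕜] [NormedAddCommGroup H] [InnerProductSpace 𝕜 H]

theorem LinearMap.exists_linearIsometryEquiv_eqOn [FiniteDimensional 𝕜 H] (T : H →ₗ[𝕜] H)
    {K : Submodule 𝕜 H} (hK : ∀ x ∈ K, ‖T x‖ = ‖x‖) : ∃ e : H ≃ₗᵢ[𝕜] H, Set.EqOn e T K := by
  let L : K →ₗᵢ[𝕜] H := ⟨T ∘ₗ K.subtype, fun x ↦ hK x x.2⟩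
  exact ⟨L.extend.toLinearIsometryEquiv rfl, fun x hx ↦ L.extend_apply ⟨x, hx⟩⟩

theorem ContinuousLinearMap.norm_map_of_mem_ker_star_mul_self_sub_one [CompleteSpace H]
    (T : H →L[𝕜] H) {x : H} (hx : x ∈ (star T * T - 1).toLinearMap.ker) : ‖T x‖ = ‖x‖ := by
  have hTx : (adjoint T ∘L T) x = x := sub_eq_zero.mp hx
  rw [apply_norm_eq_sqrt_inner_adjoint_left, hTx, ← norm_sq_eq_re_inner,
    Real.sqrt_sq (norm_nonneg x)]

theorem ContinuousLinearMap.exists_mem_unitary_finrank_range_sub_le [CompleteSpace H]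
    [FiniteDimensional 𝕜 H] (T : H →L[𝕜] H) :
    ∃ u ∈ unitary (H →L[𝕜] H), finrank 𝕜 (T - u).toLinearMap.range ≤
      finrank 𝕜 (star T * T - 1).toLinearMap.range := by
  obtain ⟨e, he⟩ := LinearMap.exists_linearIsometryEquiv_eqOn (T : H →ₗ[𝕜] H)
    fun x hx ↦ T.norm_map_of_mem_ker_star_mul_self_sub_one hx
  refine ⟨Unitary.linearIsometryEquiv.symm e, SetLike.coe_mem _, ?_⟩
  refine LinearMap.finrank_range_le_of_ker_le fun x hx ↦ ?_
  simp [he hx]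

end InnerProductSpace

namespace Matrix

variable {𝕜 n : Type*} [RCLike 𝕜] [Fintype n] [DecidableEq n]

theorem rank_eq_finrank_range_toEuclideanCLM (M : Matrix n n 𝕜) :
    M.rank = finrank 𝕜 (toEuclideanCLM (n := n) (𝕜 := 𝕜) M).toLinearMap.range :=
  M.rank_eq_finrank_range_toLin (EuclideanSpace.basisFun n 𝕜).toBasis
    (EuclideanSpace.basisFun n 𝕜).toBasis

theorem exists_mem_unitaryGroup_rank_sub_le (A : Matrix n n 𝕜) :
    ∃ U ∈ unitaryGroup n 𝕜, (A - U).rank ≤ (Aᴴ * A - 1).rank := by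
  obtain ⟨u, hu, hrank⟩ :=
    (toEuclideanCLM (n := n) (𝕜 := 𝕜) A).exists_mem_unitary_finrank_range_sub_le
  refine ⟨(toEuclideanCLM (n := n) (𝕜 := 𝕜)).symm u, Unitary.map_mem _ hu, ?_⟩
  rwa [rank_eq_finrank_range_toEuclideanCLM, rank_eq_finrank_range_toEuclideanCLM, map_sub,
    StarAlgEquiv.apply_symm_apply, map_sub, map_mul, ← star_eq_conjTranspose, map_star, map_one]

end Matrix

/-- Theorem 6: near any almost unitary matrix there is a unitary matrix:
`rank (A - U) ≤ rank (A*A - 1)` for some unitary `U`. -/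
theorem stmt_13 {n : ℕ} (A : Matrix (Fin n) (Fin n) ℂ) :
    ∃ U : Matrix (Fin n) (Fin n) ℂ, U ∈ Matrix.unitaryGroup (Fin n) ℂ ∧
      (A - U).rank ≤ (A.conjTranspose * A - 1).rank :=
  A.exists_mem_unitaryGroup_rank_sub_le
end

section
/- For every n ≥ 4 and every diagonalizable complex n×n matrix A with n distinct eigenvalues, there exists a matrix X with rank(AX − XA) ≤ 2 such that for every matrix B commuting with A, rank(X − B) ≥ n/2. In particular d_r(AX,XA) ≤ 2/n while d_r(X,B) ≥ 1/2 for all B with AB = BA. -/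
/-!
Diagonalize `A = P D P⁻¹` with `D = diagonal μ` and split the indices into a set `J` of
size `⌊n/2⌋` and its complement. Take `X = P Y P⁻¹`, where `Y i j = (α i - α j) / (μ i - μ j)`
is the divided-difference matrix of the indicator `α` of `J`: then `D Y - Y D = α 1ᵀ - 1 αᵀ`
has rank at most `2`. Matrices commuting with `D` are diagonal, and off its diagonal blocks `Y`
consists of the Cauchy blocks `± 1 / (μ i - μ k)`. A rational function `∑ c k / (t - μ k)`
vanishing at as many points as it has poles is zero (Lagrange interpolation), so these blocks
have independent columns. If `rank (Y - diagonal d) < #Jᶜ`, a kernel vector supported on `Jᶜ`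
must then have full support, which forces `d = 0` on `Jᶜ`; but then the `2 #J` columns indexed
by `J` and by a `#J`-subset of `Jᶜ` are independent, a contradiction.
-/

open Finset Polynomial Lagrange

variable {K ι : Type*} [Field K]

section Cauchy

variable [DecidableEq ι] {μ : ι → K} {R S : Finset ι} {c : ι → K}

theorem eq_zero_of_sum_div_sub_eq_zero (hμ : Function.Injective μ) (hRS : Disjoint R S)
    (hcard : #S ≤ #R) (hc : ∀ r ∈ R, ∑ k ∈ S, c k / (μ r - μ k) = 0) :
    ∀ k ∈ S, c k = 0 := by
  classical
  -- By the barycentric formula, this polynomial is `nodal S μ` times `∑ c k / (t - μ k)`.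
  have hp : interpolate S μ (fun k => c k / nodalWeight S μ k) = 0 := by
    refine eq_zero_of_degree_lt_of_eval_finset_eq_zero (R.image μ) ?_ ?_
    · rw [card_image_of_injective _ hμ]
      exact (degree_interpolate_lt _ hμ.injOn).trans_le (by exact_mod_cast hcard)
    · simp only [mem_image, forall_exists_index, and_imp]
      rintro _ r hr rfl
      have hne : ∀ k ∈ S, μ r ≠ μ k := fun k hk h => disjoint_left.mp hRS hr (hμ h ▸ hk)
      rw [eval_interpolate_not_at_node _ hne, ← mul_zero (eval (μ r) (nodal S μ)), ← hc r hr]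
      congr 1
      refine sum_congr rfl fun k hk => ?_
      have := nodalWeight_ne_zero hμ.injOn hk
      field_simp
  intro k hk
  have := eval_interpolate_at_node (fun k => c k / nodalWeight S μ k) hμ.injOn hk
  rw [hp, eval_zero, eq_comm, div_eq_zero_iff] at this
  exact this.resolve_right (nodalWeight_ne_zero hμ.injOn hk)

theorem ne_zero_of_sum_div_sub_eq_zero (hμ : Function.Injective μ) (hRS : Disjoint R S)
    (hcard : #S ≤ #R + 1) (hc : ∀ r ∈ R, ∑ k ∈ S, c k / (μ r - μ k) = 0)
    (hc0 : ∃ k ∈ S, c k ≠ 0) : ∀ k ∈ S, c k ≠ 0 := by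
  intro k hk hck
  obtain ⟨l, hl, hcl⟩ := hc0
  have hlk : l ≠ k := fun h => hcl (h ▸ hck)
  refine hcl (eq_zero_of_sum_div_sub_eq_zero hμ (hRS.mono_right (erase_subset k S))
    (by rw [card_erase_of_mem hk]; omega) (fun r hr => ?_) l (mem_erase.mpr ⟨hlk, hl⟩))
  rw [sum_erase _ (by rw [hck, zero_div])]
  exact hc r hr

end Cauchy

theorem Units.conj_mul_conj {M : Type*} [Monoid M] (u : Mˣ) (a b : M) :
    u * a * u⁻¹.val * (u * b * u⁻¹.val) = u * (a * b) * u⁻¹.val := by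
  simp [mul_assoc]

namespace Matrix

section Rank

variable {m : Type*} [Fintype ι]

theorem rank_add_le_s15 (M N : Matrix m ι K) : (M + N).rank ≤ M.rank + N.rank := by
  rw [rank, rank, rank, mulVecLin_add]
  exact (Submodule.finrank_mono (LinearMap.range_add_le _ _)).trans
    (Submodule.finrank_add_le_finrank_add_finrank _ _)

theorem card_le_rank_of_mulVec_eq_zero [Fintype m] (M : Matrix m ι K) {S : Finset ι}
    (h : ∀ z : ι → K, (∀ k ∉ S, z k = 0) → M *ᵥ z = 0 → ∀ k ∈ S, z k = 0) :
    #S ≤ M.rank := by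
  classical
  have hS : LinearIndepOn K M.col (S : Set ι) := by
    refine linearIndepOn_finset_iff.mpr fun f hf k hk => ?_
    have hz := h (fun k => if k ∈ S then f k else 0) (fun k hk => if_neg hk) ?_ k hk
    · simpa [hk] using hz
    · ext i
      simpa [mulVec, dotProduct, Finset.sum_apply, mul_comm] using congrFun hf i
  rw [rank_eq_finrank_span_cols]
  calc #S = (Set.range fun k : (S : Set ι) => M.col k).finrank K := by
        rw [← linearIndependent_iff_card_eq_finrank_span.mp hS]; simp
    _ ≤ _ := Submodule.finrank_mono (Submodule.span_mono (Set.range_comp_subset_range _ _))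

theorem exists_mulVec_eq_zero_of_rank_lt [Fintype m] (M : Matrix m ι K) {S : Finset ι}
    (h : M.rank < #S) :
    ∃ z : ι → K, (∀ k ∉ S, z k = 0) ∧ M *ᵥ z = 0 ∧ ∃ k ∈ S, z k ≠ 0 := by
  by_contra! hS
  exact h.not_ge (card_le_rank_of_mulVec_eq_zero M hS)

end Rank

variable [Fintype ι] [DecidableEq ι] {μ : ι → K}

theorem exists_injective_isRoot_charpoly [IsAlgClosed K] {A : Matrix ι ι K}
    (hA : A.charpoly.roots.Nodup) :
    ∃ μ : ι → K, Function.Injective μ ∧ ∀ i, A.charpoly.IsRoot (μ i) := by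
  classical
  have hcard : Fintype.card ι = Fintype.card A.charpoly.roots.toFinset := by
    rw [Fintype.card_coe, Multiset.toFinset_card_of_nodup hA,
      splits_iff_card_roots.mp (IsAlgClosed.splits _), charpoly_natDegree_eq_dim]
  let e := Fintype.equivOfCardEq hcard
  exact ⟨fun i => e i, Subtype.val_injective.comp e.injective,
    fun i => (mem_roots'.mp (Multiset.mem_toFinset.mp (e i).2)).2⟩

theorem exists_eq_units_mul_diagonal_mul_inv {A : Matrix ι ι K} (hμ : Function.Injective μ)
    (h : ∀ i, Module.End.HasEigenvalue (toLin' A) (μ i)) :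
    ∃ P : (Matrix ι ι K)ˣ, A = P * diagonal μ * P⁻¹.val := by
  choose v hv using fun i => (h i).exists_hasEigenvector
  obtain ⟨P, hP⟩ : IsUnit (of v)ᵀ := linearIndependent_cols_iff_isUnit.mp
    (Module.End.eigenvectors_linearIndependent' _ μ hμ v hv)
  refine ⟨P, (Units.eq_mul_inv_iff_mul_eq P).mpr ?_⟩
  ext i j
  have := congrFun (hv j).apply_eq_smul i
  simp only [toLin'_apply, mulVec, dotProduct, Pi.smul_apply, smul_eq_mul] at this
  rw [hP, mul_diagonal, mul_apply, transpose_apply, of_apply, mul_comm, ← this]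
  rfl

theorem exists_eq_units_mul_diagonal_mul_inv_of_nodup_roots [IsAlgClosed K] {A : Matrix ι ι K}
    (hA : A.charpoly.roots.Nodup) :
    ∃ (μ : ι → K) (P : (Matrix ι ι K)ˣ), Function.Injective μ ∧
      A = P * diagonal μ * P⁻¹.val := by
  obtain ⟨μ, hμ, hroot⟩ := exists_injective_isRoot_charpoly hA
  obtain ⟨P, hP⟩ := exists_eq_units_mul_diagonal_mul_inv hμ fun i =>
    (Module.End.hasEigenvalue_iff_isRoot_charpoly _ _).mpr (by rw [charpoly_toLin']; exact hroot i)
  exact ⟨μ, P, hμ, hP⟩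

theorem eq_diagonal_diag_of_diagonal_mul_eq (hμ : Function.Injective μ)
    {B : Matrix ι ι K} (h : diagonal μ * B = B * diagonal μ) : B = diagonal B.diag := by
  ext i j
  rcases eq_or_ne i j with rfl | hij
  · simp
  have hij' : μ i * B i j = B i j * μ j := by
    simpa [diagonal_mul, mul_diagonal] using congrFun (congrFun h i) j
  have : (μ i - μ j) * B i j = 0 := by linear_combination hij'
  rw [diagonal_apply_ne _ hij]
  exact (mul_eq_zero.mp this).resolve_left (sub_ne_zero.mpr (hμ.ne hij))

theorem rank_units_conj (P : (Matrix ι ι K)ˣ) (M : Matrix ι ι K) :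
    (P * M * P⁻¹.val).rank = M.rank := by
  rw [rank_mul_eq_left_of_isUnit_det _ _ ((isUnit_iff_isUnit_det _).mp P⁻¹.isUnit),
    rank_mul_eq_right_of_isUnit_det _ _ ((isUnit_iff_isUnit_det _).mp P.isUnit)]

-- The diagonal entries are `0 / 0 = 0`.
def divDiffMatrix (μ α : ι → K) : Matrix ι ι K := of fun i j => (α i - α j) / (μ i - μ j)

theorem diagonal_mul_divDiffMatrix_sub (hμ : Function.Injective μ) (α : ι → K) :
    diagonal μ * divDiffMatrix μ α - divDiffMatrix μ α * diagonal μ =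
      vecMulVec α 1 + vecMulVec 1 (-α) := by
  ext i j
  rcases eq_or_ne i j with rfl | hij
  · simp [divDiffMatrix]
  · have : μ i - μ j ≠ 0 := sub_ne_zero.mpr (hμ.ne hij)
    simp only [sub_apply, diagonal_mul, mul_diagonal, divDiffMatrix, of_apply, add_apply,
      vecMulVec_apply, Pi.one_apply, Pi.neg_apply]
    field_simp
    ring

theorem rank_commutator_divDiffMatrix_le (hμ : Function.Injective μ) (α : ι → K) :
    (diagonal μ * divDiffMatrix μ α - divDiffMatrix μ α * diagonal μ).rank ≤ 2 := by
  rw [diagonal_mul_divDiffMatrix_sub hμ]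
  exact (rank_add_le_s15 _ _).trans (add_le_add (rank_vecMulVec_le _ _) (rank_vecMulVec_le _ _))

section Indicator

variable {J : Finset ι} (d z : ι → K) {i : ι}

theorem mulVec_divDiffMatrix_indicator_sub_diagonal_of_mem (hi : i ∈ J) :
    ((divDiffMatrix μ ((J : Set ι).indicator 1) - diagonal d) *ᵥ z) i =
      ∑ k ∈ Jᶜ, z k / (μ i - μ k) - d i * z i := by
  rw [sub_mulVec, Pi.sub_apply, mulVec_diagonal]
  simp only [mulVec, dotProduct, divDiffMatrix, of_apply, Set.indicator_apply, mem_coe, hi,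
    if_true, Pi.one_apply]
  rw [← sum_add_sum_compl J, sum_eq_zero fun k hk => by simp [hk], zero_add]
  exact congrArg (· - _) (sum_congr rfl fun k hk => by simp [mem_compl.mp hk, inv_mul_eq_div])

theorem mulVec_divDiffMatrix_indicator_sub_diagonal_of_notMem (hi : i ∉ J) :
    ((divDiffMatrix μ ((J : Set ι).indicator 1) - diagonal d) *ᵥ z) i =
      -∑ k ∈ J, z k / (μ i - μ k) - d i * z i := by
  rw [sub_mulVec, Pi.sub_apply, mulVec_diagonal]
  simp only [mulVec, dotProduct, divDiffMatrix, of_apply, Set.indicator_apply, mem_coe, hi,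
    if_false, Pi.one_apply]
  rw [← sum_compl_add_sum J, sum_eq_zero fun k hk => by simp [mem_compl.mp hk], zero_add,
    ← sum_neg_distrib]
  exact congrArg (· - _) (sum_congr rfl fun k hk => by simp [hk, neg_div, inv_mul_eq_div])

theorem eq_zero_of_rank_divDiffMatrix_indicator_sub_diagonal_lt (hμ : Function.Injective μ)
    (hJcJ : #Jᶜ ≤ #J + 1)
    (hlt : (divDiffMatrix μ ((J : Set ι).indicator 1) - diagonal d).rank < #Jᶜ) :
    ∀ i ∈ Jᶜ, d i = 0 := by
  obtain ⟨y, hy_supp, hy, hy0⟩ := exists_mulVec_eq_zero_of_rank_lt _ hlt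
  have hy_ne : ∀ k ∈ Jᶜ, y k ≠ 0 := by
    refine ne_zero_of_sum_div_sub_eq_zero hμ disjoint_compl_right hJcJ (fun j hj => ?_) hy0
    have := congrFun hy j
    rwa [mulVec_divDiffMatrix_indicator_sub_diagonal_of_mem _ _ hj,
      hy_supp j (notMem_compl.mpr hj), mul_zero, sub_zero] at this
  intro i hi
  have := congrFun hy i
  rw [mulVec_divDiffMatrix_indicator_sub_diagonal_of_notMem _ _ (mem_compl.mp hi),
    sum_eq_zero fun k hk => by rw [hy_supp k (notMem_compl.mpr hk), zero_div]] at this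
  simpa [hy_ne i hi] using this

theorem two_mul_card_le_rank_divDiffMatrix_indicator_sub_diagonal (hμ : Function.Injective μ)
    (hJJc : #J ≤ #Jᶜ) (hd : ∀ i ∈ Jᶜ, d i = 0) :
    2 * #J ≤ (divDiffMatrix μ ((J : Set ι).indicator 1) - diagonal d).rank := by
  obtain ⟨I, hIJc, hIcard⟩ := exists_subset_card_eq hJJc
  have hJI : Disjoint J I := disjoint_compl_right.mono_right hIJc
  have hcard : 2 * #J = #(J ∪ I) := by rw [card_union_of_disjoint hJI, hIcard, two_mul]
  refine hcard.trans_le (card_le_rank_of_mulVec_eq_zero _ fun z hz_supp hz => ?_)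
  have hzJ : ∀ k ∈ J, z k = 0 := by
    refine eq_zero_of_sum_div_sub_eq_zero hμ disjoint_compl_left hJJc fun i hi => ?_
    have := congrFun hz i
    rwa [mulVec_divDiffMatrix_indicator_sub_diagonal_of_notMem _ _ (mem_compl.mp hi), hd i hi,
      zero_mul, sub_zero, Pi.zero_apply, neg_eq_zero] at this
  have hzI : ∀ k ∈ I, z k = 0 := by
    refine eq_zero_of_sum_div_sub_eq_zero hμ hJI hIcard.le fun j hj => ?_
    have := congrFun hz j
    rwa [mulVec_divDiffMatrix_indicator_sub_diagonal_of_mem _ _ hj, hzJ j hj, mul_zero, sub_zero,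
      ← sum_subset hIJc fun k _ hkI => by
        rw [hz_supp k (by simp [mem_compl.mp ‹k ∈ Jᶜ›, hkI]), zero_div]] at this
  intro k hk
  rcases mem_union.mp hk with hk | hk
  exacts [hzJ k hk, hzI k hk]

theorem card_compl_le_rank_divDiffMatrix_indicator_sub_diagonal (hμ : Function.Injective μ)
    (hJ : J.Nonempty) (hJJc : #J ≤ #Jᶜ) (hJcJ : #Jᶜ ≤ #J + 1) :
    #Jᶜ ≤ (divDiffMatrix μ ((J : Set ι).indicator 1) - diagonal d).rank := by
  by_contra! hlt
  have := two_mul_card_le_rank_divDiffMatrix_indicator_sub_diagonal d hμ hJJc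
    (eq_zero_of_rank_divDiffMatrix_indicator_sub_diagonal_lt d hμ hJcJ hlt)
  have := hJ.card_pos
  omega

end Indicator

end Matrix

open Matrix in
/-- Theorem (almost commuting matrices): for `n ≥ 4` and `A` with simple
spectrum there is `X` with `rank (AX - XA) ≤ 2` which is far (in rank) from
every matrix commuting with `A`. -/
theorem stmt_15 {n : ℕ} (hn : 4 ≤ n) (A : Matrix (Fin n) (Fin n) ℂ)
    (hA : A.charpoly.roots.Nodup) :
    ∃ X : Matrix (Fin n) (Fin n) ℂ, (A * X - X * A).rank ≤ 2 ∧
      ∀ B : Matrix (Fin n) (Fin n) ℂ, A * B = B * A →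
        (n : ℝ) / 2 ≤ ((X - B).rank : ℝ) := by
  obtain ⟨μ, P, hμ, rfl⟩ := exists_eq_units_mul_diagonal_mul_inv_of_nodup_roots hA
  obtain ⟨J, -, hJ⟩ := exists_subset_card_eq (s := (univ : Finset (Fin n))) (n := n / 2)
    (by rw [card_univ, Fintype.card_fin]; omega)
  set Y := divDiffMatrix μ ((J : Set (Fin n)).indicator 1)
  refine ⟨P * Y * P⁻¹.val, ?_, fun B hB => ?_⟩
  · rw [Units.conj_mul_conj, Units.conj_mul_conj, ← sub_mul, ← mul_sub, rank_units_conj]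
    exact rank_commutator_divDiffMatrix_le hμ _
  obtain ⟨B, rfl⟩ : ∃ B', B = P * B' * P⁻¹.val :=
    ⟨P⁻¹.val * B * P, by simp [Matrix.mul_assoc]⟩
  rw [Units.conj_mul_conj, Units.conj_mul_conj, Units.mul_left_inj, Units.mul_right_inj] at hB
  rw [eq_diagonal_diag_of_diagonal_mul_eq hμ hB, ← sub_mul, ← mul_sub, rank_units_conj]
  have hJc : #Jᶜ = n - n / 2 := by rw [card_compl, Fintype.card_fin, hJ]
  have hrank : #Jᶜ ≤ (Y - diagonal B.diag).rank :=
    card_compl_le_rank_divDiffMatrix_indicator_sub_diagonal B.diag hμ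
      (card_pos.mp (by omega)) (by omega) (by omega)
  have : n ≤ 2 * (Y - diagonal B.diag).rank := by omega
  rw [div_le_iff₀ two_pos]
  exact_mod_cast this.trans_eq (mul_comm _ _)
end

section
/- Let A = diag(α₁,...,αₙ) and B = diag(β₁,...,βₙ) be real diagonal matrices whose diagonal entries strictly interlace (α₁ < β₁ < α₂ < ... < αₙ < βₙ). Then there exist a unitary matrix X and a rank-one matrix R such that A·X − X·B = R. -/
/-!
Let `p = ∏ (X - αᵢ)` and `q = ∏ (X - βⱼ)`. Since `p - q` has degree `< n`, Lagrange interpolation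
at the `βⱼ` gives the partial fraction expansion `p / q = 1 + ∑ⱼ cⱼ / (X - βⱼ)` with
`cⱼ = p(βⱼ) / q'(βⱼ)`, and interlacing makes every `cⱼ` positive. Evaluating at the roots of `p`
gives `∑ⱼ cⱼ / (αᵢ - βⱼ) = -1` for all `i`, which makes the rows of the Cauchy-like matrix
`(√cⱼ / (αᵢ - βⱼ))ᵢⱼ` pairwise orthogonal. Normalising the rows gives a real orthogonal `X` with
`A X - X B = y zᵀ`, `yᵢ` the row scales and `zⱼ = √cⱼ`.
-/

open Finset Polynomial Matrix Lagrange

/-- The residue of `nodal univ α / nodal univ β` at `β j`, i.e. `p(βⱼ) / q'(βⱼ)`. -/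
noncomputable def nodalResidue {ι F : Type*} [Fintype ι] [DecidableEq ι] [Field F]
    (α β : ι → F) (j : ι) : F :=
  nodalWeight univ β j * (nodal univ α).eval (β j)

theorem sum_nodalResidue_div_sub_eq_neg_one {ι F : Type*} [Fintype ι] [DecidableEq ι] [Field F]
    {α β : ι → F} (hβ : Function.Injective β) {i : ι} (hαβ : ∀ j, α i ≠ β j) :
    ∑ j, nodalResidue α β j / (α i - β j) = -1 := by
  set f := nodal univ α - nodal univ β
  have hdeg : f.degree < #(univ : Finset ι) := by
    have := degree_sub_lt_left (p := nodal univ α) (q := nodal univ β)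
      (by rw [degree_nodal, degree_nodal]) nodal_monic.ne_zero
      (by rw [nodal_monic.leadingCoeff, nodal_monic.leadingCoeff])
    rwa [degree_nodal] at this
  have hnode : ∀ j, f.eval (β j) = (nodal univ α).eval (β j) := fun j => by
    rw [eval_sub, eval_nodal_at_node (mem_univ j), sub_zero]
  have heval := congrArg (eval (α i)) (eq_interpolate hβ.injOn hdeg)
  rw [eval_interpolate_not_at_node _ fun j _ => hαβ j, eval_sub,
    eval_nodal_at_node (mem_univ i), zero_sub] at heval
  have hq : eval (α i) (nodal univ β) ≠ 0 := eval_nodal_not_at_node fun j _ => hαβ j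
  have hsum : ∑ j, nodalResidue α β j / (α i - β j) =
      ∑ j, nodalWeight univ β j * (α i - β j)⁻¹ * f.eval (β j) :=
    sum_congr rfl fun j _ => by rw [hnode, nodalResidue, div_eq_mul_inv, mul_right_comm]
  rw [hsum]
  exact mul_left_cancel₀ hq (heval.symm.trans (mul_neg_one _).symm)

section Cauchy

variable {ι F : Type*} [Field F]

def cauchyMatrix (α β y z : ι → F) : Matrix ι ι F :=
  Matrix.of fun i j => y i * z j / (α i - β j)

theorem diagonal_mul_cauchyMatrix_sub [Fintype ι] [DecidableEq ι] {α β : ι → F} (y z : ι → F)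
    (hαβ : ∀ i j, α i ≠ β j) :
    diagonal α * cauchyMatrix α β y z - cauchyMatrix α β y z * diagonal β = vecMulVec y z := by
  ext i j
  have := sub_ne_zero.mpr (hαβ i j)
  simp only [Matrix.sub_apply, diagonal_mul, mul_diagonal, cauchyMatrix, of_apply,
    vecMulVec_apply]
  field_simp

theorem map_cauchyMatrix {K : Type*} [Field K] (f : F →+* K) (α β y z : ι → F) :
    (cauchyMatrix α β y z).map f = cauchyMatrix (f ∘ α) (f ∘ β) (f ∘ y) (f ∘ z) := by
  ext i j
  simp [cauchyMatrix]

theorem cauchyMatrix_mul_transpose_apply [Fintype ι] (α β y z : ι → F) (i k : ι) :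
    (cauchyMatrix α β y z * (cauchyMatrix α β y z)ᵀ) i k =
      y i * y k * ∑ j, z j ^ 2 / ((α i - β j) * (α k - β j)) := by
  simp only [mul_apply, transpose_apply, cauchyMatrix, of_apply, mul_sum]
  refine sum_congr rfl fun j _ => ?_
  rw [div_mul_div_comm, mul_div_assoc']
  ring

theorem sum_div_sub_mul_sub_eq_zero [Fintype ι] (c β : ι → F) {a b : F} (hab : a ≠ b)
    (ha : ∀ j, a ≠ β j) (hb : ∀ j, b ≠ β j)
    (h : ∑ j, c j / (a - β j) = ∑ j, c j / (b - β j)) :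
    ∑ j, c j / ((a - β j) * (b - β j)) = 0 := by
  have hsplit : ∀ j, c j / ((a - β j) * (b - β j)) =
      (c j / (a - β j) - c j / (b - β j)) / (b - a) := fun j => by
    have := sub_ne_zero.mpr (ha j)
    have := sub_ne_zero.mpr (hb j)
    have := sub_ne_zero.mpr hab.symm
    field_simp
    ring
  simp_rw [hsplit, ← sum_div, sum_sub_distrib, h, sub_self, zero_div]

end Cauchy

section Orthogonal

variable {ι : Type*} [Fintype ι] {α β c : ι → ℝ}

noncomputable def cauchyRowScale (α β c : ι → ℝ) (i : ι) : ℝ :=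
  (√(∑ j, c j / (α i - β j) ^ 2))⁻¹

theorem sum_div_sub_sq_pos (hαβ : ∀ i j, α i ≠ β j) (hc : ∀ j, 0 < c j) (i : ι) :
    0 < ∑ j, c j / (α i - β j) ^ 2 :=
  sum_pos (fun j _ => div_pos (hc j) (by have := sub_ne_zero.mpr (hαβ i j); positivity))
    ⟨i, mem_univ i⟩

theorem cauchyRowScale_pos (hαβ : ∀ i j, α i ≠ β j) (hc : ∀ j, 0 < c j) (i : ι) :
    0 < cauchyRowScale α β c i :=
  inv_pos.mpr (Real.sqrt_pos.mpr (sum_div_sub_sq_pos hαβ hc i))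

theorem cauchyMatrix_mem_orthogonalGroup [DecidableEq ι] (hα : Function.Injective α)
    (hαβ : ∀ i j, α i ≠ β j) (hc : ∀ j, 0 < c j)
    (hsum : ∀ i k, ∑ j, c j / (α i - β j) = ∑ j, c j / (α k - β j)) :
    cauchyMatrix α β (cauchyRowScale α β c) (fun j => √(c j)) ∈ orthogonalGroup ι ℝ := by
  rw [mem_orthogonalGroup_iff]
  ext i k
  rw [cauchyMatrix_mul_transpose_apply, one_apply]
  simp_rw [Real.sq_sqrt (hc _).le]
  split_ifs with hik
  · subst hik
    have hpos := sum_div_sub_sq_pos hαβ hc i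
    simp_rw [← sq, cauchyRowScale, inv_pow, Real.sq_sqrt hpos.le]
    exact inv_mul_cancel₀ hpos.ne'
  · rw [sum_div_sub_mul_sub_eq_zero c β (hα.ne hik) (hαβ i) (hαβ k) (hsum i k), mul_zero]

end Orthogonal

theorem Matrix.map_mem_unitaryGroup {ι : Type*} [Fintype ι] [DecidableEq ι]
    {R S : Type*} [CommRing R] [StarRing R] [CommRing S] [StarRing S]
    (f : R →+* S) (hf : Function.Semiconj f star star) {U : Matrix ι ι R}
    (hU : U ∈ unitaryGroup ι R) : U.map f ∈ unitaryGroup ι S := by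
  rw [mem_unitaryGroup_iff, star_eq_conjTranspose] at *
  rw [← conjTranspose_map f hf, ← Matrix.map_mul, hU, Matrix.map_one _ f.map_zero f.map_one]

theorem Matrix.rank_vecMulVec_eq_one_s17 {m n K : Type*} [Fintype m] [Fintype n] [Field K]
    {w : m → K} {v : n → K} (hw : w ≠ 0) (hv : v ≠ 0) : (vecMulVec w v).rank = 1 := by
  refine le_antisymm (rank_vecMulVec_le w v) (Nat.one_le_iff_ne_zero.mpr fun h0 => ?_)
  rw [rank_eq_finrank_span_cols, Submodule.finrank_eq_zero, Submodule.span_eq_bot] at h0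
  obtain ⟨i, hi⟩ := Function.ne_iff.mp hw
  obtain ⟨j, hj⟩ := Function.ne_iff.mp hv
  exact mul_ne_zero hi hj (congrFun (h0 _ ⟨j, rfl⟩) i)

structure StrictlyInterlaces {ι : Type*} [Preorder ι] (α β : ι → ℝ) : Prop where
  lt_right : ∀ i, α i < β i
  right_lt : ∀ i j, i < j → β i < α j

namespace StrictlyInterlaces

variable {ι : Type*} [LinearOrder ι] {α β : ι → ℝ} (h : StrictlyInterlaces α β)
include h

theorem strictMono_left : StrictMono α :=
  fun i j hij => (h.lt_right i).trans (h.right_lt i j hij)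

theorem strictMono_right : StrictMono β :=
  fun i j hij => (h.right_lt i j hij).trans (h.lt_right j)

theorem ne (i j : ι) : α i ≠ β j := by
  rcases le_or_gt i j with hij | hij
  · exact ((h.strictMono_left.monotone hij).trans_lt (h.lt_right j)).ne
  · exact (h.right_lt j i hij).ne'

theorem nodalResidue_pos [Fintype ι] (j : ι) : 0 < nodalResidue α β j := by
  -- `cⱼ = (βⱼ - αⱼ) ∏_{m ≠ j} (βⱼ - αₘ) / (βⱼ - βₘ)`, and both factors of each quotient
  -- have the sign of `j - m`.
  rw [nodalResidue, nodalWeight, eval_nodal, ← mul_prod_erase univ _ (mem_univ j), mul_left_comm,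
    ← prod_mul_distrib]
  refine mul_pos (sub_pos.mpr (h.lt_right j)) (prod_pos fun m hm => ?_)
  rcases lt_or_gt_of_ne (ne_of_mem_erase hm) with hmj | hjm
  · exact mul_pos (inv_pos.mpr (sub_pos.mpr (h.strictMono_right hmj)))
      (sub_pos.mpr ((h.lt_right m).trans (h.strictMono_right hmj)))
  · exact mul_pos_of_neg_of_neg (inv_lt_zero.mpr (sub_neg.mpr (h.strictMono_right hjm)))
      (sub_neg.mpr (h.right_lt j m hjm))

theorem sum_nodalResidue_div_sub [Fintype ι] (i : ι) :
    ∑ j, nodalResidue α β j / (α i - β j) = -1 :=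
  sum_nodalResidue_div_sub_eq_neg_one h.strictMono_right.injective (h.ne i)

end StrictlyInterlaces

theorem stmt_17_general {n : ℕ} (hn : 0 < n) (α β : Fin n → ℝ)
    (hint1 : ∀ i, α i < β i)
    (hint2 : ∀ i j : Fin n, i < j → β i < α j) :
    ∃ (X R : Matrix (Fin n) (Fin n) ℂ),
      X ∈ Matrix.unitaryGroup (Fin n) ℂ ∧ R.rank = 1 ∧
      Matrix.diagonal (fun i => (α i : ℂ)) * X -
        X * Matrix.diagonal (fun i => (β i : ℂ)) = R := by
  have h : StrictlyInterlaces α β := ⟨hint1, hint2⟩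
  set c := nodalResidue α β
  set y := cauchyRowScale α β c
  set z := fun j => √(c j)
  have hne : ∀ i j, (α i : ℂ) ≠ β j := fun i j => by exact_mod_cast h.ne i j
  refine ⟨(cauchyMatrix α β y z).map (↑), vecMulVec (fun i => (y i : ℂ)) (fun j => (z j : ℂ)),
    ?_, ?_, ?_⟩
  · refine map_mem_unitaryGroup Complex.ofRealHom (fun x => (Complex.conj_ofReal x).symm) ?_
    exact cauchyMatrix_mem_orthogonalGroup h.strictMono_left.injective h.ne h.nodalResidue_pos
      fun i k => by rw [h.sum_nodalResidue_div_sub i, h.sum_nodalResidue_div_sub k]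
  · have i₀ : Fin n := ⟨0, hn⟩
    refine rank_vecMulVec_eq_one_s17 (Function.ne_iff.mpr ⟨i₀, ?_⟩) (Function.ne_iff.mpr ⟨i₀, ?_⟩)
    · exact Complex.ofReal_ne_zero.mpr (cauchyRowScale_pos h.ne h.nodalResidue_pos i₀).ne'
    · exact Complex.ofReal_ne_zero.mpr (Real.sqrt_pos.mpr (h.nodalResidue_pos i₀)).ne'
  · exact map_cauchyMatrix Complex.ofRealHom α β y z ▸ diagonal_mul_cauchyMatrix_sub _ _ hne

/-- For strictly interlacing real diagonal matrices `A = diag α`,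
`B = diag β`, the Sylvester equation `A·X − X·B = R` has a solution with `X`
unitary and `R` of rank one. -/
theorem stmt_17 {n : ℕ} (hn : 0 < n) (α β : Fin n → ℝ)
    (hα : StrictMono α)
    (hint1 : ∀ i, α i < β i)
    (hint2 : ∀ i j : Fin n, i < j → β i < α j) :
    ∃ (X R : Matrix (Fin n) (Fin n) ℂ),
      X ∈ Matrix.unitaryGroup (Fin n) ℂ ∧ R.rank = 1 ∧
      Matrix.diagonal (fun i => (α i : ℂ)) * X -
        X * Matrix.diagonal (fun i => (β i : ℂ)) = R :=
  stmt_17_general hn α β hint1 hint2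
end

section
/- Let A and B be complex n×n matrices with rank(A − B) ≤ 1. Then for every λ ∈ ℂ and every m ≥ 1, the Weyr characteristics satisfy |η_m(A, λ) − η_m(B, λ)| ≤ 1, where η_m(M, λ) = dim ker(λI − M)^m − dim ker(λI − M)^{m−1}. -/
open Module LinearMap Submodule

section Aux

variable {K : Type*} [Field K] {V W : Type*} [AddCommGroup V] [Module K V]
  [AddCommGroup W] [Module K W]

/-- Rank-nullity for the restriction of a linear map to a submodule. -/
lemma aux_finrank_map_add (p : Submodule K V) [FiniteDimensional K p] (q : V →ₗ[K] W) :
    Module.finrank K (p.map q) + Module.finrank K (p ⊓ LinearMap.ker q : Submodule K V) =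
      Module.finrank K p := by
  have h := LinearMap.finrank_range_add_finrank_ker (q.comp p.subtype)
  have hr : LinearMap.range (q.comp p.subtype) = p.map q := by
    rw [LinearMap.range_comp, Submodule.range_subtype]
  have hk : LinearMap.ker (q.comp p.subtype)
      = Submodule.comap p.subtype (p ⊓ LinearMap.ker q) := by
    rw [LinearMap.ker_comp]
    ext x
    simp [x.2]
  have hk2 : Module.finrank K (LinearMap.ker (q.comp p.subtype))
      = Module.finrank K (p ⊓ LinearMap.ker q : Submodule K V) := by
    rw [hk]
    exact LinearEquiv.finrank_eq (Submodule.comapSubtypeEquivOfLe inf_le_left)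
  rw [hr, hk2] at h
  exact h

variable [FiniteDimensional K V]

lemma aux_ker_pow_le (f : Module.End K V) (k : ℕ) :
    LinearMap.ker (f ^ k) ≤ LinearMap.ker (f ^ (k + 1)) := by
  intro v hv
  rw [LinearMap.mem_ker] at hv ⊢
  rw [pow_succ', Module.End.mul_apply, hv, map_zero]

/-- The key inequality: if `f - g` has rank at most one, then
`dim ker f^(k+1) + dim ker g^k ≤ dim ker f^k + dim ker g^(k+1) + 1`. -/
lemma aux_key (f g : Module.End K V)
    (h : Module.finrank K (LinearMap.range (f - g)) ≤ 1) (k : ℕ) :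
    Module.finrank K (LinearMap.ker (f ^ (k + 1))) +
      Module.finrank K (LinearMap.ker (g ^ k)) ≤
    Module.finrank K (LinearMap.ker (f ^ k)) +
      Module.finrank K (LinearMap.ker (g ^ (k + 1))) + 1 := by
  set R : Module.End K V := f - g with hR
  -- the "observation" map
  set Φ : V →ₗ[K] (ℕ → V) := LinearMap.pi (fun j => (R ∘ₗ (f ^ j) : V →ₗ[K] V)) with hΦ
  have hΦ_apply : ∀ v j, Φ v j = R ((f ^ j) v) := fun v j => rfl
  -- the shift map
  set σ : (ℕ → V) →ₗ[K] (ℕ → V) := LinearMap.pi (fun j => LinearMap.proj (j + 1)) with hσ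
  have hσ_apply : ∀ (x : ℕ → V) j, σ x j = x (j + 1) := fun x j => rfl
  -- On ker Φ, the powers of f and g agree.
  have hfg : ∀ v ∈ LinearMap.ker Φ, ∀ j, (g ^ j) v = (f ^ j) v := by
    intro v hv j
    induction j with
    | zero => simp
    | succ j ih =>
      have hvj : R ((f ^ j) v) = 0 := by
        have := LinearMap.mem_ker.mp hv
        calc R ((f ^ j) v) = Φ v j := rfl
        _ = 0 := by rw [this]; rfl
      rw [pow_succ', pow_succ', Module.End.mul_apply, Module.End.mul_apply, ih]
      have : g ((f ^ j) v) = f ((f ^ j) v) - R ((f ^ j) v) := by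
        simp [hR]
      rw [this, hvj, sub_zero]
  have hker_eq : ∀ j, LinearMap.ker (f ^ j) ⊓ LinearMap.ker Φ
      = LinearMap.ker (g ^ j) ⊓ LinearMap.ker Φ := by
    intro j
    ext v
    simp only [Submodule.mem_inf, LinearMap.mem_ker]
    constructor
    · rintro ⟨h1, h2⟩
      exact ⟨by rw [hfg v (LinearMap.mem_ker.mpr h2) j, h1], h2⟩
    · rintro ⟨h1, h2⟩
      exact ⟨by rw [← hfg v (LinearMap.mem_ker.mpr h2) j, h1], h2⟩
  -- decompositions via Φ
  have hA1 := aux_finrank_map_add (LinearMap.ker (f ^ (k + 1))) Φ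
  have hA0 := aux_finrank_map_add (LinearMap.ker (f ^ k)) Φ
  -- shift inequality: finrank (map Φ (ker f^(k+1))) ≤ finrank (map Φ (ker f^k)) + 1
  haveI : FiniteDimensional K ((LinearMap.ker (f ^ (k + 1))).map Φ) := inferInstance
  haveI : FiniteDimensional K ((LinearMap.ker (f ^ k)).map Φ) := inferInstance
  have hshift := aux_finrank_map_add ((LinearMap.ker (f ^ (k + 1))).map Φ) σ
  have hcomm : σ ∘ₗ Φ = Φ ∘ₗ f := by
    ext v j
    simp only [LinearMap.comp_apply]
    rw [hσ_apply, hΦ_apply, hΦ_apply]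
    rw [pow_succ, Module.End.mul_apply]
  have hmapσ : ((LinearMap.ker (f ^ (k + 1))).map Φ).map σ ≤ (LinearMap.ker (f ^ k)).map Φ := by
    rw [← Submodule.map_comp, hcomm, Submodule.map_comp]
    apply Submodule.map_mono
    intro v hv
    rcases Submodule.mem_map.mp hv with ⟨w, hw, rfl⟩
    rw [LinearMap.mem_ker] at hw ⊢
    rw [← Module.End.mul_apply, ← pow_succ, hw]
  have hσbound : Module.finrank K (((LinearMap.ker (f ^ (k + 1))).map Φ).map σ)
      ≤ Module.finrank K ((LinearMap.ker (f ^ k)).map Φ) :=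
    Submodule.finrank_mono hmapσ
  -- the intersection with the kernel of the shift has dimension at most one
  have hinter : Module.finrank K
      (((LinearMap.ker (f ^ (k + 1))).map Φ) ⊓ LinearMap.ker σ : Submodule K (ℕ → V)) ≤ 1 := by
    set P : Submodule K (ℕ → V) :=
      ((LinearMap.ker (f ^ (k + 1))).map Φ) ⊓ LinearMap.ker σ with hP
    haveI : FiniteDimensional K P :=
      Submodule.finiteDimensional_of_le (inf_le_left :
        P ≤ (LinearMap.ker (f ^ (k + 1))).map Φ)
    have h0 := aux_finrank_map_add P (LinearMap.proj (R := K) (φ := fun _ : ℕ => V) 0)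
    have hbot : P ⊓ LinearMap.ker (LinearMap.proj (R := K) (φ := fun _ : ℕ => V) 0) = ⊥ := by
      rw [eq_bot_iff]
      rintro x ⟨hx, hx0⟩
      have hxσ : σ x = 0 := (Submodule.mem_inf.mp hx).2
      have h1 : ∀ j, x (j + 1) = 0 := by
        intro j
        have : σ x j = 0 := by rw [hxσ]; rfl
        rwa [hσ_apply] at this
      have h2 : x 0 = 0 := hx0
      have : x = 0 := by
        funext j
        cases j with
        | zero => exact h2
        | succ j => exact h1 j
      simp [this]
    have hle : P.map (LinearMap.proj (R := K) (φ := fun _ : ℕ => V) 0)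
        ≤ LinearMap.range R := by
      rintro x ⟨y, hy, rfl⟩
      rcases Submodule.mem_map.mp (Submodule.mem_inf.mp hy).1 with ⟨v, _, rfl⟩
      exact ⟨(f ^ 0) v, rfl⟩
    have hle2 : Module.finrank K (P.map (LinearMap.proj (R := K) (φ := fun _ : ℕ => V) 0))
        ≤ Module.finrank K (LinearMap.range R) := Submodule.finrank_mono hle
    rw [hbot] at h0
    simp only [finrank_bot, add_zero] at h0
    omega
  -- B side: quotient by ker g^k
  set q' : V →ₗ[K] (V ⧸ LinearMap.ker (g ^ k)) := (LinearMap.ker (g ^ k)).mkQ with hq'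
  have hqk : LinearMap.ker q' = LinearMap.ker (g ^ k) := Submodule.ker_mkQ _
  have hB := aux_finrank_map_add (LinearMap.ker (g ^ (k + 1))) q'
  have hZ := aux_finrank_map_add (LinearMap.ker (g ^ (k + 1)) ⊓ LinearMap.ker Φ) q'
  have hBinf : LinearMap.ker (g ^ (k + 1)) ⊓ LinearMap.ker q' = LinearMap.ker (g ^ k) := by
    rw [hqk]
    exact inf_eq_right.mpr (aux_ker_pow_le g k)
  have hZinf : (LinearMap.ker (g ^ (k + 1)) ⊓ LinearMap.ker Φ) ⊓ LinearMap.ker q'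
      = LinearMap.ker (g ^ k) ⊓ LinearMap.ker Φ := by
    rw [hqk, inf_right_comm, inf_eq_right.mpr (aux_ker_pow_le g k)]
  have hZle : Module.finrank K ((LinearMap.ker (g ^ (k + 1)) ⊓ LinearMap.ker Φ).map q')
      ≤ Module.finrank K ((LinearMap.ker (g ^ (k + 1))).map q') :=
    Submodule.finrank_mono (Submodule.map_mono inf_le_left)
  rw [hBinf] at hB
  rw [hZinf] at hZ
  rw [hker_eq (k + 1)] at hA1
  rw [hker_eq k] at hA0
  omega

end Aux

/-- The `m`-th Weyr characteristic of `M` at `λ`: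
`dim ker (λI − M)^m − dim ker (λI − M)^(m−1)`. -/
noncomputable def weyr {n : ℕ} (M : Matrix (Fin n) (Fin n) ℂ) (lam : ℂ) (m : ℕ) : ℕ :=
  Module.finrank ℂ (LinearMap.ker (((lam • (1 : Matrix (Fin n) (Fin n) ℂ) - M) ^ m).mulVecLin)) -
    Module.finrank ℂ (LinearMap.ker (((lam • (1 : Matrix (Fin n) (Fin n) ℂ) - M) ^ (m - 1)).mulVecLin))

lemma mulVecLin_sub' {n : ℕ} (M N : Matrix (Fin n) (Fin n) ℂ) :
    (M - N).mulVecLin = M.mulVecLin - N.mulVecLin := by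
  ext v
  simp [Matrix.mulVecLin_apply, Matrix.sub_mulVec]

lemma mulVecLin_neg' {n : ℕ} (M : Matrix (Fin n) (Fin n) ℂ) :
    (-M).mulVecLin = -M.mulVecLin := by
  ext v
  simp [Matrix.mulVecLin_apply, Matrix.neg_mulVec]

lemma mulVecLin_pow {n : ℕ} (M : Matrix (Fin n) (Fin n) ℂ) (j : ℕ) :
    (M ^ j).mulVecLin = (M.mulVecLin : Module.End ℂ (Fin n → ℂ)) ^ j := by
  induction j with
  | zero => simp [Matrix.mulVecLin_one, Module.End.one_eq_id]
  | succ j ih =>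
    rw [pow_succ, pow_succ, Matrix.mulVecLin_mul, ih]
    rfl

/-- A rank-one perturbation changes each Weyr characteristic by at most 1. -/
theorem stmt_18 {n : ℕ} (A B : Matrix (Fin n) (Fin n) ℂ)
    (h : (A - B).rank ≤ 1) (lam : ℂ) (m : ℕ) (hm : 1 ≤ m) :
    |(weyr A lam m : ℤ) - (weyr B lam m : ℤ)| ≤ 1 := by
  obtain ⟨k, rfl⟩ : ∃ k, m = k + 1 := ⟨m - 1, (Nat.succ_pred_eq_of_pos hm).symm⟩
  set f : Module.End ℂ (Fin n → ℂ) := (lam • (1 : Matrix (Fin n) (Fin n) ℂ) - A).mulVecLin with hf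
  set g : Module.End ℂ (Fin n → ℂ) := (lam • (1 : Matrix (Fin n) (Fin n) ℂ) - B).mulVecLin with hg
  have hfg : f - g = (B - A).mulVecLin := by
    rw [hf, hg, ← mulVecLin_sub']
    congr 1
    abel
  have hgf : g - f = (A - B).mulVecLin := by
    rw [hf, hg, ← mulVecLin_sub']
    congr 1
    abel
  have hrank_gf : Module.finrank ℂ (LinearMap.range (g - f)) ≤ 1 := by
    rw [hgf]; exact h
  have hrank_fg : Module.finrank ℂ (LinearMap.range (f - g)) ≤ 1 := by
    rw [hfg]
    have : (B - A) = -(A - B) := (neg_sub A B).symm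
    rw [this, mulVecLin_neg', LinearMap.range_neg]
    exact h
  have key1 := aux_key f g hrank_fg k
  have key2 := aux_key g f hrank_gf k
  have hwA : weyr A lam (k + 1)
      = Module.finrank ℂ (LinearMap.ker (f ^ (k + 1)))
        - Module.finrank ℂ (LinearMap.ker (f ^ k)) := by
    rw [weyr, ← mulVecLin_pow, ← mulVecLin_pow]
    simp
  have hwB : weyr B lam (k + 1)
      = Module.finrank ℂ (LinearMap.ker (g ^ (k + 1)))
        - Module.finrank ℂ (LinearMap.ker (g ^ k)) := by
    rw [weyr, ← mulVecLin_pow, ← mulVecLin_pow]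
    simp
  have hmonoA : Module.finrank ℂ (LinearMap.ker (f ^ k))
      ≤ Module.finrank ℂ (LinearMap.ker (f ^ (k + 1))) :=
    Submodule.finrank_mono (aux_ker_pow_le f k)
  have hmonoB : Module.finrank ℂ (LinearMap.ker (g ^ k))
      ≤ Module.finrank ℂ (LinearMap.ker (g ^ (k + 1))) :=
    Submodule.finrank_mono (aux_ker_pow_le g k)
  rw [hwA, hwB, abs_le]
  constructor <;>
  · push_cast [Nat.cast_sub hmonoA, Nat.cast_sub hmonoB]
    omega
end

section
/- Let A and B be complex n×n matrices with rank(A − B) = k. Then for every λ ∈ ℂ and every m ≥ 1, |η_m(A, λ) − η_m(B, λ)| ≤ k, where η_m(M, λ) = dim ker(λI − M)^m − dim ker(λI − M)^{m−1}. -/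
open Module Submodule LinearMap

section

variable {K V V₂ : Type*} [DivisionRing K] [AddCommGroup V] [Module K V] [FiniteDimensional K V]
  [AddCommGroup V₂] [Module K V₂]

theorem Submodule.finrank_map_add_finrank_inf_ker (S : Submodule K V) (f : V →ₗ[K] V₂) :
    finrank K (S.map f) + finrank K (S ⊓ ker f : Submodule K V) = finrank K S := by
  have h := finrank_range_add_finrank_ker (f.domRestrict S)
  rwa [range_domRestrict, ker_domRestrict,
    (equivMapOfInjective _ S.injective_subtype _).finrank_eq, map_comap_subtype] at h

theorem Submodule.finrank_add_finrank_map_le_of_le (f : V →ₗ[K] V₂) {S T : Submodule K V}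
    (hST : S ≤ T) : finrank K S + finrank K (T.map f) ≤ finrank K T + finrank K (S.map f) := by
  have hS := S.finrank_map_add_finrank_inf_ker f
  have hT := T.finrank_map_add_finrank_inf_ker f
  have hker := Submodule.finrank_mono (inf_le_inf_right (ker f) hST)
  omega

end

namespace Module.End

variable {K V : Type*} [DivisionRing K] [AddCommGroup V] [Module K V]

theorem map_map_pow (f : End K V) (S : Submodule K V) (j : ℕ) :
    (S.map (f ^ j)).map f = S.map (f ^ (j + 1)) := by
  rw [← Submodule.map_comp, ← mul_eq_comp, ← pow_succ']

theorem map_range_pow (f : End K V) (j : ℕ) : (range (f ^ j)).map f = range (f ^ (j + 1)) := by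
  rw [← range_comp, ← mul_eq_comp, ← pow_succ']

theorem range_pow_succ_le (f : End K V) (j : ℕ) : range (f ^ (j + 1)) ≤ range (f ^ j) := by
  rw [pow_succ, mul_eq_comp]
  exact range_comp_le_range _ _

section invariantEqLocus

variable (f g : End K V)

/-- The largest `f`-invariant subspace on which `f` and `g` agree. -/
def invariantEqLocus : Submodule K V := ⨅ i : ℕ, ker ((f - g) ∘ₗ f ^ i)

theorem mem_invariantEqLocus {x : V} :
    x ∈ invariantEqLocus f g ↔ ∀ i : ℕ, f ((f ^ i) x) = g ((f ^ i) x) := by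
  simp [invariantEqLocus, Submodule.mem_iInf, sub_eq_zero]

theorem map_invariantEqLocus_le : (invariantEqLocus f g).map f ≤ invariantEqLocus f g := by
  rintro _ ⟨x, hx, rfl⟩
  rw [SetLike.mem_coe, mem_invariantEqLocus] at hx
  rw [mem_invariantEqLocus]
  intro i
  simpa only [pow_succ, mul_apply] using hx (i + 1)

theorem pow_apply_eq_of_mem_invariantEqLocus {x : V} (hx : x ∈ invariantEqLocus f g) (i : ℕ) :
    (f ^ i) x = (g ^ i) x := by
  induction i with
  | zero => rfl
  | succ i ih =>
    rw [pow_succ', pow_succ', mul_apply, mul_apply, (mem_invariantEqLocus f g).1 hx i, ih]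

theorem map_pow_invariantEqLocus (i : ℕ) :
    (invariantEqLocus f g).map (f ^ i) = (invariantEqLocus f g).map (g ^ i) := by
  ext y
  simp only [Submodule.mem_map]
  constructor <;> rintro ⟨x, hx, rfl⟩ <;>
    exact ⟨x, hx, by rw [pow_apply_eq_of_mem_invariantEqLocus f g hx]⟩

theorem comap_inf_ker_sub_le_invariantEqLocus :
    (invariantEqLocus f g).comap f ⊓ ker (f - g) ≤ invariantEqLocus f g := by
  rintro x ⟨hfx, hx⟩
  rw [SetLike.mem_coe, mem_comap, mem_invariantEqLocus] at hfx
  rw [SetLike.mem_coe, mem_ker, LinearMap.sub_apply, sub_eq_zero] at hx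
  rw [mem_invariantEqLocus]
  rintro (_ | i)
  · exact hx
  · simpa only [pow_succ, mul_apply] using hfx i

end invariantEqLocus

variable [FiniteDimensional K V]

/-- `finrank (range f ^ j) - finrank (range f ^ (j + 1) ⊔ W.map (f ^ j))` is the dimension of
the cokernel of the map induced by `f` on `range (f ^ j) ⧸ W.map (f ^ j)`; applying `f` maps
each of these quotients onto the next, so this dimension can only decrease. -/
theorem finrank_range_pow_add_finrank_sup_le (f : End K V) (W : Submodule K V) (j : ℕ) :
    finrank K (range (f ^ j)) + finrank K (range f ⊔ W : Submodule K V) ≤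
      finrank K (range (f ^ (j + 1)) ⊔ W.map (f ^ j) : Submodule K V) + finrank K V := by
  induction j with
  | zero => rw [pow_zero, pow_one, one_eq_id, range_id, Submodule.map_id, finrank_top]; omega
  | succ j ih =>
    have hle : range (f ^ (j + 1)) ⊔ W.map (f ^ j) ≤ range (f ^ j) :=
      sup_le (range_pow_succ_le f j) map_le_range
    have hf := finrank_add_finrank_map_le_of_le f hle
    rw [Submodule.map_sup, map_range_pow, map_map_pow, map_range_pow] at hf
    omega

theorem finrank_range_pow_add_le_of_map_le (f : End K V) {W : Submodule K V}
    (hW : W.map f ≤ W) (j : ℕ) :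
    finrank K (range (f ^ j)) + finrank K (W.map (f ^ (j + 1))) +
        finrank K (range f ⊔ W : Submodule K V) ≤
      finrank K (range (f ^ (j + 1))) + finrank K (W.map (f ^ j)) + finrank K V := by
  have hcoker := finrank_range_pow_add_finrank_sup_le f W j
  have hmod := finrank_sup_add_finrank_inf_eq (range (f ^ (j + 1))) (W.map (f ^ j))
  have hsucc : W.map (f ^ (j + 1)) ≤ W.map (f ^ j) := by
    rw [pow_succ, mul_eq_comp, Submodule.map_comp]
    exact map_mono hW
  have hinf := Submodule.finrank_mono (le_inf map_le_range hsucc)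
  omega

/-- The kernel and the cokernel of the map induced by `f` on `V ⧸ W` have the same dimension, so
`finrank V - finrank (range f ⊔ W) = finrank (W.comap f) - finrank W`, which the hypothesis bounds
by `finrank (range h)`. -/
theorem finrank_le_finrank_sup_add_finrank_range (f : End K V) {h : End K V} {W : Submodule K V}
    (hW : W.comap f ⊓ ker h ≤ W) :
    finrank K V ≤ finrank K (range f ⊔ W : Submodule K V) + finrank K (range h) := by
  have hcomap : finrank K (W.comap f) =
      finrank K (range f ⊓ W : Submodule K V) + finrank K (ker f) := by
    rw [← (W.comap f).finrank_map_add_finrank_inf_ker f, map_comap_eq,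
      inf_eq_right.2 (ker_le_comap f)]
  have hsplit := (W.comap f).finrank_map_add_finrank_inf_ker h
  have hmap := Submodule.finrank_mono (map_le_range : (W.comap f).map h ≤ range h)
  have hinf := Submodule.finrank_mono hW
  have hmod := finrank_sup_add_finrank_inf_eq (range f) W
  have hrank := finrank_range_add_finrank_ker f
  omega

theorem finrank_range_pow_add_finrank_range_pow_succ_le (f g : End K V) (j : ℕ) :
    finrank K (range (f ^ j)) + finrank K (range (g ^ (j + 1))) ≤
      finrank K (range (f ^ (j + 1))) + finrank K (range (g ^ j)) + finrank K (range (f - g)) := by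
  have hf := finrank_range_pow_add_le_of_map_le f (map_invariantEqLocus_le f g) j
  have hcoker := finrank_le_finrank_sup_add_finrank_range f
    (comap_inf_ker_sub_le_invariantEqLocus f g)
  have hg := finrank_add_finrank_map_le_of_le g
    (map_le_range (f := g ^ j) (p := invariantEqLocus f g))
  rw [map_map_pow, map_range_pow] at hg
  rw [map_pow_invariantEqLocus f g j, map_pow_invariantEqLocus f g (j + 1)] at hf
  omega

end Module.End

theorem weyr_succ_eq {n : ℕ} (M : Matrix (Fin n) (Fin n) ℂ) (lam : ℂ) (j : ℕ) :
    (weyr M lam (j + 1) : ℤ) =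
      finrank ℂ (range (Matrix.toLin' (lam • 1 - M) ^ j)) -
        finrank ℂ (range (Matrix.toLin' (lam • 1 - M) ^ (j + 1))) := by
  have hj := finrank_range_add_finrank_ker (Matrix.toLin' (lam • 1 - M) ^ j)
  have hj1 := finrank_range_add_finrank_ker (Matrix.toLin' (lam • 1 - M) ^ (j + 1))
  have hle := Submodule.finrank_mono (End.range_pow_succ_le (Matrix.toLin' (lam • 1 - M)) j)
  rw [weyr, Nat.add_sub_cancel, ← Matrix.toLin'_apply', ← Matrix.toLin'_apply',
    Matrix.toLin'_pow, Matrix.toLin'_pow]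
  omega

theorem stmt_19_general {n : ℕ} (A B : Matrix (Fin n) (Fin n) ℂ)
    (k : ℕ) (h : (A - B).rank = k) (lam : ℂ) (m : ℕ) :
    |(weyr A lam m : ℤ) - (weyr B lam m : ℤ)| ≤ (k : ℤ) := by
  rcases m with _ | j
  · simp [weyr]
  rw [weyr_succ_eq, weyr_succ_eq, abs_sub_le_iff]
  set f := Matrix.toLin' (lam • 1 - A)
  set g := Matrix.toLin' (lam • 1 - B)
  have hgf : finrank ℂ (range (g - f)) = k := by
    rw [← map_sub, sub_sub_sub_cancel_left]
    exact h
  have hfg : finrank ℂ (range (f - g)) = k := by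
    rw [← neg_sub, range_neg, hgf]
  have hAB := End.finrank_range_pow_add_finrank_range_pow_succ_le f g j
  have hBA := End.finrank_range_pow_add_finrank_range_pow_succ_le g f j
  omega

/-- A rank-k perturbation changes each Weyr characteristic by at most k. -/
theorem stmt_19 {n : ℕ} (A B : Matrix (Fin n) (Fin n) ℂ)
    (k : ℕ) (h : (A - B).rank = k) (lam : ℂ) (m : ℕ) (hm : 1 ≤ m) :
    |(weyr A lam m : ℤ) - (weyr B lam m : ℤ)| ≤ (k : ℤ) :=
  stmt_19_general A B k h lam m
end
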